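/- arXiv:math/9812088 — 5 statements merged into one kernel-verified Lean document; each statement's English description precedes it below -/
import Mathlib

section
/- Let (X, μ) be a probability space and {h_t : t ∈ ℕ} a sequence of nonnegative measurable functions with ∫ h_t dμ ≤ 1 for all t, satisfying the Sprindžuk condition: there is C > 0 such that for all N > M ≥ 1, ∫_X (∑_{t=M}^N h_t(x) − ∑_{t=M}^N ∫h_t dμ)² dμ(x) ≤ C · ∑_{t=M}^N ∫h_t dμ. If ∑_{t=1}^∞ ∫ h_t dμ = ∞, then for μ-almost every x, (∑_{t=1}^N h_t(x)) / (∑_{t=1}^N ∫ h_t dμ) → 1 as N → ∞. -/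
/-!
Let `S N = ∑_{t=1}^N h_t` and `Φ N = ∑_{t=1}^N ∫ h_t`. Since `∫ h_t ≤ 1`, `Φ` climbs to infinity in
steps of at most one, so it passes within distance one of every level `(j + 2)²` at some time
`n_j`. The Sprindžuk condition gives `∫ (S(n_j)/Φ(n_j) - 1)² ≤ C / Φ(n_j) ≤ C / (j + 2)²`, which is
summable, so `S(n_j)/Φ(n_j) → 1` almost everywhere. Consecutive levels have ratio tending to one,
and monotonicity of `S` and `Φ` squeezes `S N / Φ N` between the values at consecutive `n_j`.
-/

open MeasureTheory Filter Finset Topology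

theorem monotone_sum_Icc_of_nonneg {f : ℕ → ℝ} (hf : ∀ t, 0 ≤ f t) (M : ℕ) :
    Monotone fun N => ∑ t ∈ Icc M N, f t :=
  (sum_mono_set_of_nonneg hf).comp fun _ _ h => Icc_subset_Icc_right h

theorem tendsto_sum_Icc_one_atTop {f : ℕ → ℝ} (hf : ∀ t, 0 ≤ f t) (hdiv : ¬ Summable f) :
    Tendsto (fun N => ∑ t ∈ Icc 1 N, f t) atTop atTop := by
  have h := ((not_summable_iff_tendsto_nat_atTop_of_nonneg hf).1 hdiv).comp
    (tendsto_add_atTop_nat 1)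
  refine (tendsto_atTop_add_const_right _ (-f 0) h).congr fun N => ?_
  rw [Function.comp_apply, sum_range_eq_add_Ico _ (Nat.add_one_pos N), Ico_add_one_right_eq_Icc]
  ring

theorem exists_le_le_add_one_of_tendsto_atTop {Φ : ℕ → ℝ} (hstep : ∀ N, Φ (N + 1) ≤ Φ N + 1)
    (htop : Tendsto Φ atTop atTop) {c : ℝ} (hc : Φ 0 ≤ c) : ∃ N, c ≤ Φ N ∧ Φ N ≤ c + 1 := by
  have hex : ∃ N, c ≤ Φ N := (htop.eventually_ge_atTop c).exists
  refine ⟨Nat.find hex, Nat.find_spec hex, ?_⟩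
  rcases h : Nat.find hex with _ | N
  · linarith
  · have hN : Φ N < c := not_le.1 (Nat.find_min hex (by omega))
    linarith [hstep N]

theorem exists_strictMono_sq_le_of_tendsto_atTop {Φ : ℕ → ℝ} (hΦ : Monotone Φ)
    (hstep : ∀ N, Φ (N + 1) ≤ Φ N + 1) (htop : Tendsto Φ atTop atTop) (h0 : Φ 0 ≤ 4) :
    ∃ n : ℕ → ℕ, StrictMono n ∧ (∀ j : ℕ, ((j : ℝ) + 2) ^ 2 ≤ Φ (n j)) ∧
      Tendsto (fun j => Φ (n (j + 1)) / Φ (n j)) atTop (𝓝 1) := by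
  choose n hlo hhi using fun j : ℕ =>
    exists_le_le_add_one_of_tendsto_atTop hstep htop (c := ((j : ℝ) + 2) ^ 2)
      (h0.trans (by nlinarith [j.cast_nonneg (α := ℝ)]))
  have hlo_succ : ∀ j : ℕ, ((j : ℝ) + 3) ^ 2 ≤ Φ (n (j + 1)) := fun j => by
    have := hlo (j + 1)
    push_cast at this
    linarith
  have hn : StrictMono n := strictMono_nat_of_lt_succ fun j =>
    hΦ.reflect_lt (by nlinarith [hhi j, hlo_succ j, j.cast_nonneg (α := ℝ)])
  have hpos : ∀ j, 0 < Φ (n j) := fun j => (by positivity : (0 : ℝ) < _).trans_le (hlo j)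
  have hup : ∀ j, Φ (n (j + 1)) / Φ (n j) ≤ 1 + 3 / ((j : ℝ) + 2) := fun j => by
    have hj : (0 : ℝ) < (j : ℝ) + 2 := by positivity
    have hquot : (j : ℝ) + 2 ≤ Φ (n j) / ((j : ℝ) + 2) := by
      rw [le_div_iff₀ hj]
      nlinarith [hlo j]
    have hnext := hhi (j + 1)
    push_cast at hnext
    rw [div_le_iff₀ (hpos j)]
    calc Φ (n (j + 1)) ≤ Φ (n j) + 3 * ((j : ℝ) + 2) := by nlinarith [hlo j]
      _ ≤ Φ (n j) + 3 * (Φ (n j) / ((j : ℝ) + 2)) := by linarith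
      _ = (1 + 3 / ((j : ℝ) + 2)) * Φ (n j) := by ring
  have hlim : Tendsto (fun j : ℕ => 1 + 3 / ((j : ℝ) + 2)) atTop (𝓝 1) := by
    simpa using ((tendsto_const_div_atTop_nhds_zero_nat (3 : ℝ)).comp
      (tendsto_add_atTop_nat 2)).const_add 1
  refine ⟨n, hn, hlo, tendsto_of_tendsto_of_tendsto_of_le_of_le tendsto_const_nhds hlim
    (fun j => ?_) hup⟩
  rw [le_div_iff₀ (hpos j), one_mul]
  exact hΦ (hn.monotone j.le_succ)

theorem tendsto_div_of_tendsto_div_comp_strictMono {S Φ : ℕ → ℝ} {n : ℕ → ℕ} (hS : Monotone S)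
    (hS0 : ∀ N, 0 ≤ S N) (hΦ : Monotone Φ) (hn : StrictMono n) (hΦn : ∀ j, 0 < Φ (n j))
    (hratio : Tendsto (fun j => Φ (n (j + 1)) / Φ (n j)) atTop (𝓝 1))
    (hsub : Tendsto (fun j => S (n j) / Φ (n j)) atTop (𝓝 1)) :
    Tendsto (fun N => S N / Φ N) atTop (𝓝 1) := by
  choose! k hk using fun N (hN : n 0 < N) =>
    hn.exists_between_of_tendsto_atTop hn.tendsto_atTop hN
  have hk_top : Tendsto k atTop atTop := by
    refine tendsto_atTop_atTop.2 fun J => ⟨n J + 1, fun N hN => ?_⟩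
    by_contra! hlt
    have h1 := (hk N (lt_of_le_of_lt (hn.monotone J.zero_le) hN)).2
    have h2 := hn.monotone (show k N + 1 ≤ J by omega)
    omega
  have hlow : Tendsto (fun j => S (n j) / Φ (n (j + 1))) atTop (𝓝 1) := by
    have := hsub.div hratio one_ne_zero
    rw [div_one] at this
    refine this.congr fun j => ?_
    simp only [Pi.div_apply]
    field_simp [(hΦn j).ne', (hΦn (j + 1)).ne']
  have hup : Tendsto (fun j => S (n (j + 1)) / Φ (n j)) atTop (𝓝 1) := by
    have := (hsub.comp (tendsto_add_atTop_nat 1)).mul hratio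
    rw [one_mul] at this
    refine this.congr fun j => ?_
    simp only [Function.comp_apply]
    field_simp [(hΦn j).ne', (hΦn (j + 1)).ne']
  refine tendsto_of_tendsto_of_tendsto_of_le_of_le' (hlow.comp hk_top) (hup.comp hk_top) ?_ ?_
  all_goals
    filter_upwards [eventually_gt_atTop (n 0)] with N hN
    obtain ⟨hlo, hhi⟩ := hk N hN
    have hΦN : 0 < Φ N := (hΦn _).trans_le (hΦ hlo.le)
  · calc S (n (k N)) / Φ (n (k N + 1)) ≤ S (n (k N)) / Φ N :=
          div_le_div_of_nonneg_left (hS0 _) hΦN (hΦ hhi)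
      _ ≤ S N / Φ N := div_le_div_of_nonneg_right (hS hlo.le) hΦN.le
  · calc S N / Φ N ≤ S (n (k N + 1)) / Φ N := div_le_div_of_nonneg_right (hS hhi) hΦN.le
      _ ≤ S (n (k N + 1)) / Φ (n (k N)) :=
          div_le_div_of_nonneg_left (hS0 _) (hΦn _) (hΦ hlo.le)

section

variable {X : Type*} [MeasurableSpace X] {μ : Measure X}

theorem ae_tendsto_zero_of_summable_integral_sq {Z : ℕ → X → ℝ} (hZ : ∀ j, MemLp (Z j) 2 μ)
    (hsum : Summable fun j => ∫ x, Z j x ^ 2 ∂μ) :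
    ∀ᵐ x ∂μ, Tendsto (fun j => Z j x) atTop (𝓝 0) := by
  have hint : ∀ j, Integrable (fun x => Z j x ^ 2) μ := fun j => (hZ j).integrable_sq
  have hnorm_eq : ∀ j, eLpNorm (fun x => Z j x ^ 2) 1 μ = ENNReal.ofReal (∫ x, Z j x ^ 2 ∂μ) :=
    fun j => by
      rw [eLpNorm_one_eq_lintegral_enorm,
        ofReal_integral_eq_lintegral_ofReal (hint j) (ae_of_all _ fun x => sq_nonneg _)]
      simp_rw [Real.enorm_of_nonneg (sq_nonneg _)]
  have hnorm : ∑' j, eLpNorm (fun x => Z j x ^ 2) 1 μ ≠ ⊤ := by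
    rw [tsum_congr hnorm_eq,
      ← ENNReal.ofReal_tsum_of_nonneg (fun j => integral_nonneg fun x => sq_nonneg _) hsum]
    exact ENNReal.ofReal_ne_top
  filter_upwards [summable_norm_of_tsum_eLpNorm_ne_top le_rfl
    (fun j => (hint j).aestronglyMeasurable) hnorm] with x hx
  have := hx.tendsto_atTop_zero.sqrt
  simp only [norm_pow, Real.sqrt_sq (norm_nonneg _), Real.sqrt_zero] at this
  exact tendsto_zero_iff_norm_tendsto_zero.2 this

theorem ae_tendsto_div_of_integral_sq_sub_le [IsFiniteMeasure μ] {Y : ℕ → X → ℝ} {a : ℕ → ℝ} {C : ℝ}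
    (hY : ∀ j, MemLp (Y j) 2 μ) (ha : ∀ j, a j ≠ 0)
    (hvar : ∀ j, ∫ x, (Y j x - a j) ^ 2 ∂μ ≤ C * a j) (hsum : Summable fun j => 1 / a j) :
    ∀ᵐ x ∂μ, Tendsto (fun j => Y j x / a j) atTop (𝓝 1) := by
  set Z : ℕ → X → ℝ := fun j x => (Y j x - a j) / a j
  have hZ : ∀ j, MemLp (Z j) 2 μ := fun j => by
    simpa only [Z, div_eq_mul_inv, Pi.sub_apply] using
      ((hY j).sub (memLp_const (a j))).mul_const (a j)⁻¹
  have hZ_int : ∀ j, ∫ x, Z j x ^ 2 ∂μ ≤ C * (1 / a j) := fun j => by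
    simp only [Z, div_pow, integral_div]
    calc (∫ x, (Y j x - a j) ^ 2 ∂μ) / a j ^ 2 ≤ C * a j / a j ^ 2 :=
          div_le_div_of_nonneg_right (hvar j) (sq_nonneg _)
      _ = C * (1 / a j) := by field_simp
  filter_upwards [ae_tendsto_zero_of_summable_integral_sq hZ
    ((hsum.mul_left C).of_nonneg_of_le (fun j => integral_nonneg fun x => sq_nonneg _) hZ_int)]
    with x hx
  refine (zero_add (1 : ℝ) ▸ hx.add_const 1).congr fun j => ?_
  simp only [Z, sub_div, div_self (ha j), sub_add_cancel]

end

theorem stmt_2_general {X : Type*} [MeasurableSpace X] (μ : Measure X) [IsProbabilityMeasure μ]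
    (h : ℕ → X → ℝ) (hL2 : ∀ t, MemLp (h t) 2 μ) (hnn : ∀ t x, 0 ≤ h t x)
    (hbd : ∀ t, ∫ x, h t x ∂μ ≤ 1)
    (C : ℝ)
    (hSP : ∀ M N : ℕ, 1 ≤ M → M < N →
      ∫ x, ((∑ t ∈ Finset.Icc M N, h t x) - ∑ t ∈ Finset.Icc M N, ∫ y, h t y ∂μ) ^ 2 ∂μ
        ≤ C * ∑ t ∈ Finset.Icc M N, ∫ y, h t y ∂μ)
    (hdiv : ¬ Summable (fun t => ∫ y, h t y ∂μ)) :
    ∀ᵐ x ∂μ, Tendsto (fun N => (∑ t ∈ Finset.Icc 1 N, h t x) /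
        (∑ t ∈ Finset.Icc 1 N, ∫ y, h t y ∂μ)) atTop (nhds 1) := by
  set Φ : ℕ → ℝ := fun N => ∑ t ∈ Icc 1 N, ∫ y, h t y ∂μ
  have hΦ_mono : Monotone Φ := monotone_sum_Icc_of_nonneg (fun t => integral_nonneg (hnn t)) 1
  have hΦ_step : ∀ N, Φ (N + 1) ≤ Φ N + 1 := fun N => by
    simp only [Φ, sum_Icc_succ_top (Nat.le_add_left 1 N)]
    linarith [hbd (N + 1)]
  obtain ⟨n, hn, hn_sq, hratio⟩ := exists_strictMono_sq_le_of_tendsto_atTop hΦ_mono hΦ_step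
    (tendsto_sum_Icc_one_atTop (fun t => integral_nonneg (hnn t)) hdiv) (by simp [Φ])
  have hΦn_pos : ∀ j, 0 < Φ (n j) := fun j => (by positivity : (0 : ℝ) < _).trans_le (hn_sq j)
  have hn_gt_one : ∀ j, 1 < n j := fun j => hΦ_mono.reflect_lt <| by
    have := hΦ_step 0
    nlinarith [hn_sq j, (j.cast_nonneg : (0 : ℝ) ≤ j), show Φ 0 = 0 by simp [Φ]]
  have hsum : Summable fun j => 1 / Φ (n j) := by
    refine .of_nonneg_of_le (fun j => (one_div_pos.2 (hΦn_pos j)).le)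
      (fun j => one_div_le_one_div_of_le (by positivity) (hn_sq j)) ?_
    exact_mod_cast (summable_nat_add_iff 2).2 (Real.summable_one_div_nat_pow.2 one_lt_two)
  have hsub : ∀ᵐ x ∂μ, Tendsto (fun j => (∑ t ∈ Icc 1 (n j), h t x) / Φ (n j)) atTop (𝓝 1) :=
    ae_tendsto_div_of_integral_sq_sub_le (fun j => memLp_finsetSum _ fun t _ => hL2 t)
      (fun j => (hΦn_pos j).ne') (fun j => hSP 1 (n j) le_rfl (hn_gt_one j)) hsum
  filter_upwards [hsub] with x hx
  exact tendsto_div_of_tendsto_div_comp_strictMono (monotone_sum_Icc_of_nonneg (hnn · x) 1)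
    (fun N => sum_nonneg fun t _ => hnn t x) hΦ_mono hn hΦn_pos hratio hx

/-- Sprindžuk's lemma (Chapter I, Lemma 10). -/
theorem stmt_2 {X : Type*} [MeasurableSpace X] (μ : Measure X) [IsProbabilityMeasure μ]
    (h : ℕ → X → ℝ) (hL2 : ∀ t, MemLp (h t) 2 μ) (hnn : ∀ t x, 0 ≤ h t x)
    (hbd : ∀ t, ∫ x, h t x ∂μ ≤ 1)
    (C : ℝ) (hC : 0 < C)
    (hSP : ∀ M N : ℕ, 1 ≤ M → M < N →
      ∫ x, ((∑ t ∈ Finset.Icc M N, h t x) - ∑ t ∈ Finset.Icc M N, ∫ y, h t y ∂μ) ^ 2 ∂μ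
        ≤ C * ∑ t ∈ Finset.Icc M N, ∫ y, h t y ∂μ)
    (hdiv : ¬ Summable (fun t => ∫ y, h t y ∂μ)) :
    ∀ᵐ x ∂μ, Tendsto (fun N => (∑ t ∈ Finset.Icc 1 N, h t x) /
        (∑ t ∈ Finset.Icc 1 N, ∫ y, h t y ∂μ)) atTop (nhds 1) :=
  stmt_2_general μ h hL2 hnn hbd C hSP hdiv
end

section
/- Let a : ℕ → ℝ^d be a sequence of vectors such that inf_{s ≠ t} ‖a_s − a_t‖ > 0. Then for every β > 0, sup_{t ∈ ℕ} ∑_{s=1}^∞ exp(−β ‖a_s − a_t‖) < ∞. -/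
/-!
Put disjoint balls of radius `ε / 2` around the separated points `a s`. On the ball around
`a s` the weight `exp (-β ‖x - a t‖)` is at least `exp (-β ε / 2)` times its value at `a s`,
so `vol (ball 0 (ε / 2))` times the sum over `s` is at most `exp (β ε / 2) ∫ exp (-β ‖x‖) dx`,
a bound independent of `t`. The integral is finite because `exp (-β u) = O ((1 + u) ^ (-(d + 1)))`,
by the Taylor bound `(β (1 + u)) ^ n / n! ≤ exp (β (1 + u))`.
-/

open MeasureTheory Metric Real Module
open scoped ENNReal Nat

lemma exp_neg_mul_le_one_add_rpow_neg {β u : ℝ} (hβ : 0 < β) (hu : 0 ≤ u) (n : ℕ) :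
    exp (-β * u) ≤ n ! * exp β / β ^ n * (1 + u) ^ (-(n : ℝ)) := by
  have hu' : 0 < 1 + u := by linarith
  have htaylor := pow_div_factorial_le_exp _ (mul_nonneg hβ.le hu'.le) n
  rw [mul_pow, div_le_iff₀ (by positivity), mul_add, mul_one, exp_add] at htaylor
  calc exp (-β * u) = n ! * exp β / (exp β * exp (β * u) * n !) := by
        rw [neg_mul, exp_neg]; field_simp
    _ ≤ n ! * exp β / (β ^ n * (1 + u) ^ n) := by gcongr
    _ = _ := by rw [rpow_neg hu'.le, rpow_natCast]; field_simp

lemma exp_neg_mul_norm_sub_le_of_mem_ball {E : Type*} [SeminormedAddCommGroup E] {β r : ℝ}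
    (hβ : 0 ≤ β) {x y c : E} (hx : x ∈ ball y r) :
    exp (-β * ‖y - c‖) ≤ exp (β * r) * exp (-β * ‖x - c‖) := by
  rw [← exp_add, exp_le_exp]
  have : ‖x - c‖ ≤ ‖x - y‖ + ‖y - c‖ := norm_sub_le_norm_sub_add_norm_sub x y c
  rw [mem_ball, dist_eq_norm] at hx
  nlinarith

lemma tsum_mul_measure_le_lintegral {ι α : Type*} [Countable ι] [MeasurableSpace α]
    {μ : Measure α} {U : ι → Set α} (hU : ∀ i, MeasurableSet (U i))
    (hdisj : Pairwise (Function.onFun Disjoint U)) {f : ι → ℝ≥0∞} {g : α → ℝ≥0∞}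
    (hfg : ∀ i, ∀ x ∈ U i, f i ≤ g x) :
    ∑' i, f i * μ (U i) ≤ ∫⁻ x, g x ∂μ :=
  calc ∑' i, f i * μ (U i) = ∑' i, ∫⁻ _ in U i, f i ∂μ := by simp_rw [setLIntegral_const]
    _ ≤ ∑' i, ∫⁻ x in U i, g x ∂μ := ENNReal.tsum_le_tsum fun i ↦ setLIntegral_mono' (hU i) (hfg i)
    _ = ∫⁻ x in ⋃ i, U i, g x ∂μ := (lintegral_iUnion hU hdisj g).symm
    _ ≤ ∫⁻ x, g x ∂μ := setLIntegral_le_lintegral _ _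

lemma tsum_toReal_le_of_tsum_ofReal_le {ι : Type*} {f : ι → ℝ} (hf : ∀ i, 0 ≤ f i)
    {C : ℝ≥0∞} (hC : C ≠ ∞) (h : ∑' i, ENNReal.ofReal (f i) ≤ C) : ∑' i, f i ≤ C.toReal := by
  calc ∑' i, f i = (∑' i, ENNReal.ofReal (f i)).toReal := by
        rw [ENNReal.tsum_toReal_eq fun _ ↦ ENNReal.ofReal_ne_top]
        simp_rw [ENNReal.toReal_ofReal (hf _)]
    _ ≤ C.toReal := ENNReal.toReal_mono hC h

section

variable {E : Type*} [NormedAddCommGroup E] [MeasurableSpace E] [BorelSpace E]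
  (μ : Measure E) [μ.IsAddHaarMeasure]

lemma integrable_exp_neg_mul_norm [NormedSpace ℝ E] [FiniteDimensional ℝ E] {β : ℝ} (hβ : 0 < β) :
    Integrable (fun x : E ↦ exp (-β * ‖x‖)) μ := by
  have hdom := (integrable_one_add_norm (μ := μ) (r := finrank ℝ E + 1) (by simp)).const_mul
    ((finrank ℝ E + 1) ! * exp β / β ^ (finrank ℝ E + 1))
  refine hdom.mono' (by fun_prop) (.of_forall fun x ↦ ?_)
  rw [Real.norm_of_nonneg (exp_pos _).le]
  exact_mod_cast exp_neg_mul_le_one_add_rpow_neg hβ (norm_nonneg x) (finrank ℝ E + 1)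

lemma tsum_ofReal_exp_neg_mul_norm_sub_mul_le {ι : Type*} [Countable ι] {a : ι → E} {ε β : ℝ}
    (hsep : ∀ i j, i ≠ j → ε ≤ ‖a i - a j‖) (hβ : 0 ≤ β) (c : E) :
    (∑' i, ENNReal.ofReal (exp (-β * ‖a i - c‖))) * μ (ball 0 (ε / 2)) ≤
      ENNReal.ofReal (exp (β * (ε / 2))) * ∫⁻ x, ENNReal.ofReal (exp (-β * ‖x‖)) ∂μ := by
  have hdisj : Pairwise (Function.onFun Disjoint fun i ↦ ball (a i) (ε / 2)) := fun i j hij ↦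
    ball_disjoint_ball (by rw [dist_eq_norm]; linarith [hsep i j hij])
  calc (∑' i, ENNReal.ofReal (exp (-β * ‖a i - c‖))) * μ (ball 0 (ε / 2))
      = ∑' i, ENNReal.ofReal (exp (-β * ‖a i - c‖)) * μ (ball (a i) (ε / 2)) := by
        simp_rw [Measure.addHaar_ball_center, ENNReal.tsum_mul_right]
    _ ≤ ∫⁻ x, ENNReal.ofReal (exp (β * (ε / 2))) * ENNReal.ofReal (exp (-β * ‖x - c‖)) ∂μ := by
        refine tsum_mul_measure_le_lintegral (fun _ ↦ measurableSet_ball) hdisj fun i x hx ↦ ?_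
        rw [← ENNReal.ofReal_mul (exp_pos _).le]
        exact ENNReal.ofReal_le_ofReal (exp_neg_mul_norm_sub_le_of_mem_ball hβ hx)
    _ = ENNReal.ofReal (exp (β * (ε / 2))) * ∫⁻ x, ENNReal.ofReal (exp (-β * ‖x‖)) ∂μ := by
        rw [lintegral_const_mul' _ _ ENNReal.ofReal_ne_top,
          lintegral_sub_right_eq_self (fun x ↦ ENNReal.ofReal (exp (-β * ‖x‖))) c]

end

theorem exists_forall_tsum_exp_neg_mul_norm_sub_le {E ι : Type*} [NormedAddCommGroup E]
    [NormedSpace ℝ E] [FiniteDimensional ℝ E] [Countable ι] {a : ι → E}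
    (hsep : ∃ ε > 0, ∀ i j, i ≠ j → ε ≤ ‖a i - a j‖) {β : ℝ} (hβ : 0 < β) :
    ∃ M, ∀ c : E, ∑' i, exp (-β * ‖a i - c‖) ≤ M := by
  obtain ⟨ε, hε, hsep⟩ := hsep
  borelize E
  set μ : Measure E := Measure.addHaar
  have hball : μ (ball 0 (ε / 2)) ≠ 0 := (measure_ball_pos μ _ (half_pos hε)).ne'
  set C := ENNReal.ofReal (exp (β * (ε / 2))) * ∫⁻ x, ENNReal.ofReal (exp (-β * ‖x‖)) ∂μ
  have hC : C ≠ ∞ := ENNReal.mul_ne_top ENNReal.ofReal_ne_top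
    (integrable_exp_neg_mul_norm μ hβ).lintegral_lt_top.ne
  refine ⟨(C / μ (ball 0 (ε / 2))).toReal, fun c ↦ ?_⟩
  refine tsum_toReal_le_of_tsum_ofReal_le (fun _ ↦ (exp_pos _).le) (ENNReal.div_ne_top hC hball) ?_
  rw [ENNReal.le_div_iff_mul_le (.inl hball) (.inl measure_ball_lt_top.ne)]
  exact tsum_ofReal_exp_neg_mul_norm_sub_mul_le μ hsep hβ.le c

/-- A uniformly separated sequence in ℝ^d satisfies the (ED) summability condition (§4.4). -/
theorem stmt_4 (d : ℕ) (a : ℕ → EuclideanSpace ℝ (Fin d))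
    (hsep : ∃ ε > 0, ∀ s t : ℕ, s ≠ t → ε ≤ ‖a s - a t‖)
    (β : ℝ) (hβ : 0 < β) :
    ∃ M : ℝ, ∀ t : ℕ, (∑' s : ℕ, Real.exp (-β * ‖a s - a t‖)) ≤ M := by
  obtain ⟨M, hM⟩ := exists_forall_tsum_exp_neg_mul_norm_sub_le hsep hβ
  exact ⟨M, fun t ↦ hM (a t)⟩
end

section
/- Fix integers m, n ≥ 1, let x₀ > 0 and ψ : [x₀, ∞) → (0, ∞) be continuous and non-increasing. Then there exists a unique continuous function r : [t₀, ∞) → ℝ, where t₀ = (m/(m+n)) log x₀ − (n/(m+n)) log ψ(x₀), such that: (a) t ↦ t − n r(t) is strictly increasing and tends to +∞; (b) t ↦ t + m r(t) is non-decreasing; (c) ψ(e^{t − n r(t)}) = e^{−t − m r(t)} for all t ≥ t₀. -/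
/-!
In the coordinates `λ = log x`, `P(λ) = -log ψ(e^λ)` (`logProfile ψ`), condition (c) says that
the point `(t - n r(t), t + m r(t))` lies on the graph of `P`. Since this point also lies on the
line `m λ + n L = (m + n) t`, (c) amounts to `Φ(t - n r(t)) = t` for
`Φ(λ) = (m λ + n P(λ)) / (m + n)` (`daniLevel m n P`). As `P` is continuous and non-decreasing on
`[log x₀, ∞)`, `Φ` is an increasing homeomorphism of `[log x₀, ∞)` onto `[t₀, ∞)`, so
`r(t) = (t - Φ⁻¹(t)) / n` works and is the only candidate, once one knows that
`t - n r(t) ≥ log x₀`. For that, note that `t - n r(t)` can only take the value `log x₀` at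
`t = t₀`; by the intermediate value theorem it can therefore never drop below it.
-/

open Filter Set

theorem exists_orderIso_eqOn_Ici {f : ℝ → ℝ} {a : ℝ} (hc : ContinuousOn f (Ici a))
    (hs : StrictMonoOn f (Ici a)) (htop : Tendsto f atTop atTop) :
    ∃ e : ℝ ≃o ℝ, EqOn e f (Ici a) := by
  -- extend `f` to the left of `a` by a line of slope one
  set F : ℝ → ℝ := fun x => f (max x a) + min (x - a) 0
  have hFs : StrictMono F := by
    intro x y hxy
    rcases le_or_gt a x with hax | hxa
    · have hay : a ≤ y := hax.trans hxy.le
      simpa [F, hax, hay] using hs (mem_Ici.2 hax) (mem_Ici.2 hay) hxy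
    · have hf : f (max x a) ≤ f (max y a) :=
        hs.monotoneOn (le_max_right x a) (le_max_right y a) (max_le_max_right a hxy.le)
      have hmin : min (x - a) 0 < min (y - a) 0 := by
        rw [min_eq_left (by linarith)]
        exact lt_min (by linarith) (by linarith)
      exact add_lt_add_of_le_of_lt hf hmin
  have hFc : Continuous F :=
    (hc.comp_continuous (continuous_id.max continuous_const) fun x => le_max_right x a).add
      ((continuous_id.sub continuous_const).min continuous_const)
  have hFtop : Tendsto F atTop atTop := by
    refine htop.congr' ?_
    filter_upwards [eventually_ge_atTop a] with x hx
    simp [F, hx]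
  have hFbot : Tendsto F atBot atBot := by
    refine (tendsto_atBot_add_const_right _ (f a - a) tendsto_id).congr' ?_
    filter_upwards [eventually_le_atBot a] with x hx
    simp only [F, max_eq_right hx, min_eq_left (sub_nonpos.2 hx), id]
    ring
  exact ⟨StrictMono.orderIsoOfSurjective F hFs (hFc.surjective hFtop hFbot),
    fun x hx => by simp [F, mem_Ici.1 hx]⟩

theorem ContinuousOn.forall_le_of_tendsto_atTop {f : ℝ → ℝ} {t₀ a : ℝ}
    (hc : ContinuousOn f (Ici t₀)) (htop : Tendsto f atTop atTop)
    (hfa : ∀ τ ∈ Ici t₀, f τ = a → τ = t₀) : ∀ t ∈ Ici t₀, a ≤ f t := by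
  intro t ht
  by_contra! hlt
  obtain ⟨u, hua, htu⟩ := ((htop.eventually_ge_atTop a).and (eventually_ge_atTop t)).exists
  have hsub : Icc t u ⊆ Ici t₀ := fun v hv => le_trans ht hv.1
  obtain ⟨τ, hτ, hfτ⟩ := intermediate_value_Icc htu (hc.mono hsub) ⟨hlt.le, hua⟩
  have hτt : τ = t := le_antisymm ((hfa τ (hsub hτ) hfτ).le.trans ht) hτ.1
  exact hlt.ne (hτt ▸ hfτ)

section DaniLevel

variable {m n : ℝ} {P : ℝ → ℝ}

noncomputable def daniLevel (m n : ℝ) (P : ℝ → ℝ) (l : ℝ) : ℝ := (m * l + n * P l) / (m + n)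

theorem daniLevel_sub_mul_eq_iff (hmn : m + n ≠ 0) (hn : n ≠ 0) {t s : ℝ} :
    daniLevel m n P (t - n * s) = t ↔ P (t - n * s) = t + m * s := by
  rw [daniLevel, div_eq_iff hmn]
  constructor
  · intro h
    apply mul_left_cancel₀ hn
    linear_combination h
  · intro h
    rw [h]
    ring

theorem strictMonoOn_daniLevel {s : Set ℝ} (hm : 0 < m) (hn : 0 ≤ n) (hP : MonotoneOn P s) :
    StrictMonoOn (daniLevel m n P) s := by
  intro x hx y hy hxy
  have hPxy : n * P x ≤ n * P y := mul_le_mul_of_nonneg_left (hP hx hy hxy.le) hn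
  exact div_lt_div_of_pos_right (by nlinarith) (by linarith)

theorem continuousOn_daniLevel {s : Set ℝ} (hP : ContinuousOn P s) :
    ContinuousOn (daniLevel m n P) s :=
  ((continuousOn_const.mul continuousOn_id).add (continuousOn_const.mul hP)).div_const _

theorem tendsto_daniLevel_atTop {a : ℝ} (hm : 0 < m) (hn : 0 ≤ n) (hP : MonotoneOn P (Ici a)) :
    Tendsto (daniLevel m n P) atTop atTop := by
  have hlin : Tendsto (fun l => (m * l + n * P a) / (m + n)) atTop atTop :=
    (tendsto_atTop_add_const_right _ _ (tendsto_id.const_mul_atTop hm)).atTop_div_const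
      (by linarith)
  refine tendsto_atTop_mono' _ ?_ hlin
  filter_upwards [eventually_ge_atTop a] with l hl
  have hPl : n * P a ≤ n * P l := mul_le_mul_of_nonneg_left (hP self_mem_Ici hl hl) hn
  exact div_le_div_of_nonneg_right (by linarith) (by linarith)

end DaniLevel

section RateFunction

variable {m n x₀ t₀ : ℝ} {ψ : ℝ → ℝ}

noncomputable def logProfile (ψ : ℝ → ℝ) (l : ℝ) : ℝ := -Real.log (ψ (Real.exp l))

theorem logProfile_eq_iff {l s : ℝ} (hψ : 0 < ψ (Real.exp l)) :
    logProfile ψ l = s ↔ ψ (Real.exp l) = Real.exp (-s) := by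
  rw [logProfile, neg_eq_iff_eq_neg, ← Real.exp_eq_exp, Real.exp_log hψ]

theorem exp_mem_Ici_of_log_le (hx₀ : 0 < x₀) {l : ℝ} (hl : Real.log x₀ ≤ l) :
    Real.exp l ∈ Ici x₀ := by
  rw [mem_Ici, ← Real.exp_log hx₀]
  exact Real.exp_le_exp.2 hl

theorem monotoneOn_logProfile (hx₀ : 0 < x₀) (hanti : AntitoneOn ψ (Ici x₀))
    (hpos : ∀ x ∈ Ici x₀, 0 < ψ x) : MonotoneOn (logProfile ψ) (Ici (Real.log x₀)) := by
  intro u hu v hv huv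
  have hu' := exp_mem_Ici_of_log_le hx₀ hu
  have hv' := exp_mem_Ici_of_log_le hx₀ hv
  exact neg_le_neg <| Real.log_le_log (hpos _ hv') (hanti hu' hv' (Real.exp_le_exp.2 huv))

theorem continuousOn_logProfile (hx₀ : 0 < x₀) (hcont : ContinuousOn ψ (Ici x₀))
    (hpos : ∀ x ∈ Ici x₀, 0 < ψ x) : ContinuousOn (logProfile ψ) (Ici (Real.log x₀)) := by
  have hψexp : ContinuousOn (fun l => ψ (Real.exp l)) (Ici (Real.log x₀)) :=
    hcont.comp Real.continuous_exp.continuousOn fun _ hl => exp_mem_Ici_of_log_le hx₀ hl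
  exact (Real.continuousOn_log.comp hψexp
    fun _ hl => (hpos _ (exp_mem_Ici_of_log_le hx₀ hl)).ne').neg

def IsDaniRate (m n : ℝ) (ψ : ℝ → ℝ) (t₀ : ℝ) (r : ℝ → ℝ) : Prop :=
  ContinuousOn r (Ici t₀) ∧
    StrictMonoOn (fun t => t - n * r t) (Ici t₀) ∧
    Tendsto (fun t => t - n * r t) atTop atTop ∧
    MonotoneOn (fun t => t + m * r t) (Ici t₀) ∧
    ∀ t ∈ Ici t₀, ψ (Real.exp (t - n * r t)) = Real.exp (-t - m * r t)

theorem exists_isDaniRate (hm : 0 < m) (hn : 0 < n) (hx₀ : 0 < x₀)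
    (hcont : ContinuousOn ψ (Ici x₀)) (hanti : AntitoneOn ψ (Ici x₀))
    (hpos : ∀ x ∈ Ici x₀, 0 < ψ x) (ht₀ : t₀ = daniLevel m n (logProfile ψ) (Real.log x₀)) :
    ∃ r, IsDaniRate m n ψ t₀ r := by
  have hPmono := monotoneOn_logProfile hx₀ hanti hpos
  obtain ⟨e, he⟩ := exists_orderIso_eqOn_Ici
    (continuousOn_daniLevel (continuousOn_logProfile hx₀ hcont hpos))
    (strictMonoOn_daniLevel hm hn.le hPmono) (tendsto_daniLevel_atTop hm hn.le hPmono)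
  have hle : ∀ t ∈ Ici t₀, Real.log x₀ ≤ e.symm t := fun t ht => by
    rw [e.le_symm_apply, he self_mem_Ici, ← ht₀]
    exact ht
  set r : ℝ → ℝ := fun t => (t - e.symm t) / n
  have hsub : ∀ t, t - n * r t = e.symm t := fun t => by
    simp only [r]
    field_simp
    ring
  have hadd : ∀ t ∈ Ici t₀, t + m * r t = logProfile ψ (e.symm t) := fun t ht => by
    rw [← hsub t, eq_comm, ← daniLevel_sub_mul_eq_iff (by positivity) hn.ne', hsub t,
      ← he (hle t ht), e.apply_symm_apply]
  refine ⟨r, ((continuous_id.sub e.symm.continuous).div_const _).continuousOn, ?_, ?_, ?_, ?_⟩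
  · simpa only [hsub] using e.symm.strictMono.strictMonoOn _
  · simpa only [hsub] using e.symm.tendsto_atTop
  · intro s hs t ht hst
    simp only [hadd s hs, hadd t ht]
    exact hPmono (hle s hs) (hle t ht) (e.symm.monotone hst)
  · intro t ht
    rw [hsub, show -t - m * r t = -(t + m * r t) by ring]
    exact (logProfile_eq_iff (hpos _ (exp_mem_Ici_of_log_le hx₀ (hle t ht)))).1 (hadd t ht).symm

theorem IsDaniRate.daniLevel_sub_mul_eq (hmn : m + n ≠ 0) (hn : n ≠ 0) {r : ℝ → ℝ}
    (hr : IsDaniRate m n ψ t₀ r) {t : ℝ} (ht : t ∈ Ici t₀) :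
    daniLevel m n (logProfile ψ) (t - n * r t) = t := by
  rw [daniLevel_sub_mul_eq_iff hmn hn,
    logProfile_eq_iff (hr.2.2.2.2 t ht ▸ Real.exp_pos _), hr.2.2.2.2 t ht]
  ring_nf

theorem IsDaniRate.le_sub_mul (hmn : m + n ≠ 0) (hn : n ≠ 0) {a : ℝ}
    (ht₀ : t₀ = daniLevel m n (logProfile ψ) a) {r : ℝ → ℝ} (hr : IsDaniRate m n ψ t₀ r) :
    ∀ t ∈ Ici t₀, a ≤ t - n * r t :=
  ContinuousOn.forall_le_of_tendsto_atTop (f := fun t => t - n * r t)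
    (continuousOn_id.sub (continuousOn_const.mul hr.1)) hr.2.2.1
    fun τ hτ hτa => by rw [ht₀, ← hτa, hr.daniLevel_sub_mul_eq hmn hn hτ]

theorem IsDaniRate.eqOn (hm : 0 < m) (hn : 0 < n) (hx₀ : 0 < x₀)
    (hanti : AntitoneOn ψ (Ici x₀)) (hpos : ∀ x ∈ Ici x₀, 0 < ψ x)
    (ht₀ : t₀ = daniLevel m n (logProfile ψ) (Real.log x₀)) {r₁ r₂ : ℝ → ℝ}
    (h₁ : IsDaniRate m n ψ t₀ r₁) (h₂ : IsDaniRate m n ψ t₀ r₂) : EqOn r₁ r₂ (Ici t₀) := by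
  intro t ht
  have hmn : m + n ≠ 0 := by positivity
  have hsub : t - n * r₁ t = t - n * r₂ t :=
    (strictMonoOn_daniLevel hm hn.le (monotoneOn_logProfile hx₀ hanti hpos)).injOn
      (h₁.le_sub_mul hmn hn.ne' ht₀ t ht) (h₂.le_sub_mul hmn hn.ne' ht₀ t ht)
      ((h₁.daniLevel_sub_mul_eq hmn hn.ne' ht).trans (h₂.daniLevel_sub_mul_eq hmn hn.ne' ht).symm)
  exact mul_left_cancel₀ hn.ne' (sub_right_injective hsub)

end RateFunction

/-- Lemma 8.3: the Dani correspondence ψ ↦ r, existence and uniqueness. -/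
theorem stmt_9 (m n : ℕ) (hm : 1 ≤ m) (hn : 1 ≤ n) (x₀ : ℝ) (hx₀ : 0 < x₀)
    (ψ : ℝ → ℝ) (hcont : ContinuousOn ψ (Ici x₀)) (hanti : AntitoneOn ψ (Ici x₀))
    (hpos : ∀ x ∈ Ici x₀, 0 < ψ x)
    (t₀ : ℝ)
    (ht₀ : t₀ = ((m : ℝ) / (m + n)) * Real.log x₀ - ((n : ℝ) / (m + n)) * Real.log (ψ x₀)) :
    (∃ r : ℝ → ℝ, ContinuousOn r (Ici t₀) ∧
      StrictMonoOn (fun t => t - n * r t) (Ici t₀) ∧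
      Tendsto (fun t => t - n * r t) atTop atTop ∧
      MonotoneOn (fun t => t + m * r t) (Ici t₀) ∧
      ∀ t ∈ Ici t₀, ψ (Real.exp (t - n * r t)) = Real.exp (-t - m * r t)) ∧
    (∀ r₁ r₂ : ℝ → ℝ,
      (ContinuousOn r₁ (Ici t₀) ∧
        StrictMonoOn (fun t => t - n * r₁ t) (Ici t₀) ∧
        Tendsto (fun t => t - n * r₁ t) atTop atTop ∧
        MonotoneOn (fun t => t + m * r₁ t) (Ici t₀) ∧
        ∀ t ∈ Ici t₀, ψ (Real.exp (t - n * r₁ t)) = Real.exp (-t - m * r₁ t)) →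
      (ContinuousOn r₂ (Ici t₀) ∧
        StrictMonoOn (fun t => t - n * r₂ t) (Ici t₀) ∧
        Tendsto (fun t => t - n * r₂ t) atTop atTop ∧
        MonotoneOn (fun t => t + m * r₂ t) (Ici t₀) ∧
        ∀ t ∈ Ici t₀, ψ (Real.exp (t - n * r₂ t)) = Real.exp (-t - m * r₂ t)) →
      EqOn r₁ r₂ (Ici t₀)) := by
  have hm' : (0 : ℝ) < m := by exact_mod_cast hm
  have hn' : (0 : ℝ) < n := by exact_mod_cast hn
  have ht₀' : t₀ = daniLevel m n (logProfile ψ) (Real.log x₀) := by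
    rw [ht₀, daniLevel, logProfile, Real.exp_log hx₀]
    ring
  exact ⟨exists_isDaniRate hm' hn' hx₀ hcont hanti hpos ht₀',
    fun _ _ h₁ h₂ => IsDaniRate.eqOn hm' hn' hx₀ hanti hpos ht₀' h₁ h₂⟩
end

section
/- With the correspondence of Lemma 8.3 (ψ non-increasing continuous on [x₀,∞), r the corresponding function on [t₀,∞) with ψ(e^{t−nr(t)}) = e^{−t−mr(t)}, λ(t) = t − nr(t) strictly increasing to ∞, L(t) = t + mr(t) non-decreasing), for any non-negative integer q: ∫_{x₀}^∞ (log x)^q ψ(x) dx < ∞ if and only if ∫_{t₀}^∞ t^q e^{−(m+n) r(t)} dt < ∞. -/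
/-!
Write `λ t = t - n r t` and `L t = t + m r t`, so that `(m + n) t = m λ t + n L t`,
`-(m + n) r = λ - L` and `ψ (exp (λ t)) = exp (-L t)`. Let `τ j` be a preimage under `λ` of the
grid point `s j = a + j`, for a large `a`, and put `u j = s j ^ q * exp (s j - L (τ j))`.

On `[exp (s j), exp (s (j + 1))]` the monotonicity of `ψ` makes the left integral comparable to
`u j` (with a shift of one index in the lower bound). On `[τ j, τ (j + 1)]` the identity above and
`λ ≤ s j + 1` force `L t ≥ L (τ j) + (t - τ j) - m / n`, so the right integrand decays
exponentially from `τ j` on and the piece is at most a constant times `u j + exp (-s j)`; the error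
term accounts for the indices with `L (τ j)` much larger than `s j`, where `τ j` is not comparable
to `s j`. Conversely `τ (j + 1) - τ j ≥ m / (m + n)` bounds `u (j + 1)` by the piece. Hence both
integrals are finite exactly when `∑ u j` is.
-/

open Filter Set MeasureTheory Real
open scoped ENNReal Nat

theorem lintegral_Ioi_eq_tsum_lintegral_Ioc {u : ℕ → ℝ} (hu : Monotone u)
    (hu_top : Tendsto u atTop atTop) (f : ℝ → ℝ≥0∞) :
    ∫⁻ x in Ioi (u 0), f x = ∑' j, ∫⁻ x in Ioc (u j) (u (j + 1)), f x := by
  have hunion : (⋃ j, Ioc (u j) (u (j + 1))) = Ioi (u 0) := by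
    simpa [Order.succ_eq_add_one] using iUnion_Ioc_map_succ_eq_Ioi (f := u)
      (fun j => hu (Nat.zero_le j)) (not_bddAbove_iff.2 fun b =>
        let ⟨j, hj⟩ := (hu_top.eventually_gt_atTop b).exists; ⟨u j, mem_range_self j, hj⟩)
  rw [← hunion, lintegral_iUnion (fun _ => measurableSet_Ioc)]
  simpa [Order.succ_eq_add_one] using hu.pairwise_disjoint_on_Ioc_succ

theorem integrableOn_Ici_iff_tsum_lintegral_Ioc_lt_top {f : ℝ → ℝ} {x₀ : ℝ} {u : ℕ → ℝ}
    (hu : Monotone u) (hu_top : Tendsto u atTop atTop) (hx₀ : x₀ ≤ u 0)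
    (hf : ContinuousOn f (Ici x₀)) (hf_nonneg : ∀ x ∈ Ioi (u 0), 0 ≤ f x) :
    IntegrableOn f (Ici x₀) ↔
      ∑' j, ∫⁻ x in Ioc (u j) (u (j + 1)), ENNReal.ofReal (f x) < ∞ := by
  have hIoi : Ioi (u 0) ⊆ Ici x₀ := fun x hx => hx₀.trans (le_of_lt hx)
  rw [← Icc_union_Ioi_eq_Ici hx₀, integrableOn_union,
    and_iff_right ((hf.mono Icc_subset_Ici_self).integrableOn_Icc),
    ← lintegral_Ioi_eq_tsum_lintegral_Ioc hu hu_top, lt_top_iff_ne_top,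
    lintegral_ofReal_ne_top_iff_integrable ((hf.mono hIoi).aestronglyMeasurable measurableSet_Ioi)
      ((ae_restrict_iff' measurableSet_Ioi).2 (ae_of_all _ hf_nonneg))]
  rfl

theorem tsum_lt_top_iff_of_le_mul_add {A U E : ℕ → ℝ≥0∞} {C C' : ℝ≥0∞} (hC : C ≠ ∞)
    (hC' : C' ≠ ∞) (hU₀ : U 0 ≠ ∞) (hE : ∑' j, E j ≠ ∞) (hAU : ∀ j, A j ≤ C * (U j + E j))
    (hUA : ∀ j, U (j + 1) ≤ C' * A j) :
    ∑' j, A j < ∞ ↔ ∑' j, U j < ∞ := by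
  constructor
  · intro hA
    rw [tsum_eq_zero_add' ENNReal.summable]
    calc U 0 + ∑' j, U (j + 1) ≤ U 0 + ∑' j, C' * A j := by gcongr with j; exact hUA j
      _ = U 0 + C' * ∑' j, A j := by rw [ENNReal.tsum_mul_left]
      _ < ∞ := ENNReal.add_lt_top.2 ⟨hU₀.lt_top, ENNReal.mul_lt_top hC'.lt_top hA⟩
  · intro hU
    calc ∑' j, A j ≤ ∑' j, C * (U j + E j) := ENNReal.tsum_le_tsum hAU
      _ = C * (∑' j, U j + ∑' j, E j) := by rw [ENNReal.tsum_mul_left, ENNReal.tsum_add]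
      _ < ∞ := ENNReal.mul_lt_top hC.lt_top (ENNReal.add_lt_top.2 ⟨hU, hE.lt_top⟩)

theorem setLIntegral_Ioc_ofReal_le {f : ℝ → ℝ} {a b c : ℝ} (hc : 0 ≤ c)
    (hf : ∀ x ∈ Ioc a b, f x ≤ c) :
    ∫⁻ x in Ioc a b, ENNReal.ofReal (f x) ≤ ENNReal.ofReal (c * (b - a)) := by
  calc ∫⁻ x in Ioc a b, ENNReal.ofReal (f x) ≤ ∫⁻ _ in Ioc a b, ENNReal.ofReal c :=
        setLIntegral_mono' measurableSet_Ioc fun x hx => ENNReal.ofReal_le_ofReal (hf x hx)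
    _ = ENNReal.ofReal (c * (b - a)) := by
        rw [setLIntegral_const, Real.volume_Ioc, ENNReal.ofReal_mul hc]

theorem ofReal_le_setLIntegral_Ioc {f : ℝ → ℝ} {a b c : ℝ} (hc : 0 ≤ c)
    (hf : ∀ x ∈ Ioc a b, c ≤ f x) :
    ENNReal.ofReal (c * (b - a)) ≤ ∫⁻ x in Ioc a b, ENNReal.ofReal (f x) := by
  calc ENNReal.ofReal (c * (b - a)) = ∫⁻ _ in Ioc a b, ENNReal.ofReal c := by
        rw [setLIntegral_const, Real.volume_Ioc, ENNReal.ofReal_mul hc]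
    _ ≤ ∫⁻ x in Ioc a b, ENNReal.ofReal (f x) :=
        setLIntegral_mono' measurableSet_Ioc fun x hx => ENNReal.ofReal_le_ofReal (hf x hx)

theorem lintegral_Ioi_exp_sub_div_two (c : ℝ) :
    ∫⁻ t in Ioi c, ENNReal.ofReal (exp ((c - t) / 2)) = 2 := by
  have hrw : (fun t => exp ((c - t) / 2)) = fun t => exp (c / 2) * exp (-(1 / 2) * t) := by
    ext t; rw [← Real.exp_add]; ring_nf
  have hint : IntegrableOn (fun t => exp ((c - t) / 2)) (Ioi c) := by
    rw [hrw]
    exact (integrableOn_exp_mul_Ioi (by norm_num) c).const_mul _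
  rw [← ofReal_integral_eq_lintegral_ofReal hint (ae_of_all _ fun _ => (exp_pos _).le), hrw,
    integral_const_mul, integral_exp_mul_Ioi (by norm_num), neg_div_neg_eq, ← mul_div_assoc,
    ← Real.exp_add, show c / 2 + -(1 / 2) * c = 0 by ring]
  norm_num

theorem add_one_pow_le_two_pow_mul {s : ℝ} (hs : 1 ≤ s) (q : ℕ) : (s + 1) ^ q ≤ 2 ^ q * s ^ q := by
  rw [← mul_pow]
  exact pow_le_pow_left₀ (by linarith) (by linarith) q

theorem pow_le_factorial_mul_exp {x : ℝ} (hx : 0 ≤ x) (q : ℕ) : x ^ q ≤ q ! * exp x := by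
  have := Real.pow_div_factorial_le_exp x hx q
  rwa [div_le_iff₀ (by positivity), mul_comm] at this

theorem pow_mul_exp_sub_le {τ t : ℝ} (hτ : 0 ≤ τ) (hτt : τ ≤ t) (q : ℕ) :
    t ^ q * exp (τ - t) ≤ 2 ^ q * q ! * exp 1 * (τ + 1) ^ q * exp ((τ - t) / 2) := by
  set w := t - τ
  have ht : t ≤ (τ + 1) * (2 * ((1 + w) / 2)) := by nlinarith
  have hpow : t ^ q ≤ (τ + 1) ^ q * (2 ^ q * ((1 + w) / 2) ^ q) := by
    rw [← mul_pow, ← mul_pow]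
    exact pow_le_pow_left₀ (by linarith) ht q
  have hexp := pow_le_factorial_mul_exp (x := (1 + w) / 2) (by positivity) q
  have hτt' : τ - t = -w := by ring
  calc t ^ q * exp (τ - t) ≤ (τ + 1) ^ q * (2 ^ q * (q ! * exp ((1 + w) / 2))) * exp (-w) := by
        rw [hτt']
        gcongr
        exact hpow.trans (by gcongr)
    _ = 2 ^ q * q ! * (τ + 1) ^ q * exp (1 / 2 + (τ - t) / 2) := by
        rw [hτt', show 1 / 2 + -w / 2 = (1 + w) / 2 + -w by ring, Real.exp_add]
        ring
    _ ≤ 2 ^ q * q ! * exp 1 * (τ + 1) ^ q * exp ((τ - t) / 2) := by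
        rw [Real.exp_add, show 2 ^ q * q ! * exp 1 * (τ + 1) ^ q * exp ((τ - t) / 2) =
          2 ^ q * q ! * (τ + 1) ^ q * (exp 1 * exp ((τ - t) / 2)) by ring]
        gcongr
        norm_num

theorem add_one_pow_mul_exp_sub_le {s L τ : ℝ} (hs : 1 ≤ s) (hτ : 0 ≤ τ) (hτ_le : τ ≤ max s L)
    (q : ℕ) : (τ + 1) ^ q * exp (s - L) ≤ 8 ^ q * q ! * (s ^ q * exp (s - L) + exp (-s)) := by
  have hfac : (1 : ℝ) ≤ q ! := by exact_mod_cast Nat.one_le_iff_ne_zero.2 (Nat.factorial_ne_zero q)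
  rcases le_or_gt L (4 * s) with hL | hL
  · have hpow : (τ + 1) ^ q ≤ 8 ^ q * q ! * s ^ q := by
      calc (τ + 1) ^ q ≤ (8 * s) ^ q := pow_le_pow_left₀ (by linarith) (by
            rcases le_total s L with h | h
            · rw [max_eq_right h] at hτ_le; linarith
            · rw [max_eq_left h] at hτ_le; linarith) q
        _ = 8 ^ q * 1 * s ^ q := by ring
        _ ≤ 8 ^ q * q ! * s ^ q := by gcongr
    calc (τ + 1) ^ q * exp (s - L) ≤ 8 ^ q * q ! * s ^ q * exp (s - L) := by gcongr
      _ ≤ 8 ^ q * q ! * (s ^ q * exp (s - L) + exp (-s)) := by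
        rw [mul_add, ← mul_assoc]
        exact le_add_of_nonneg_right (by positivity)
  · have hτL : τ + 1 ≤ 8 * (L / 4) := by
      rw [max_eq_right (by linarith)] at hτ_le; linarith
    calc (τ + 1) ^ q * exp (s - L) ≤ (8 * (L / 4)) ^ q * exp (s - L) := by
          gcongr
      _ ≤ 8 ^ q * (q ! * exp (L / 4)) * exp (s - L) := by
          rw [mul_pow]; gcongr; exact pow_le_factorial_mul_exp (by linarith) q
      _ = 8 ^ q * q ! * exp (s - 3 * L / 4) := by
          rw [mul_assoc, mul_assoc, ← Real.exp_add]; ring_nf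
      _ ≤ 8 ^ q * q ! * exp (-s) := by gcongr; linarith
      _ ≤ 8 ^ q * q ! * (s ^ q * exp (s - L) + exp (-s)) := by
          gcongr; exact le_add_of_nonneg_left (by positivity)

section LogSide

variable {ψ : ℝ → ℝ} {x₀ : ℝ}

theorem lintegral_Ioc_exp_log_pow_mul_le {s : ℝ} (hs : 1 ≤ s) (hx₀ : x₀ ≤ exp s)
    (hψ : AntitoneOn ψ (Ici x₀)) (hψ0 : ∀ x ∈ Ici x₀, 0 ≤ ψ x) (q : ℕ) :
    ∫⁻ x in Ioc (exp s) (exp (s + 1)), ENNReal.ofReal (log x ^ q * ψ x) ≤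
      ENNReal.ofReal (2 ^ q * exp 1) * ENNReal.ofReal (s ^ q * exp s * ψ (exp s)) := by
  have hψs : 0 ≤ ψ (exp s) := hψ0 _ hx₀
  refine (setLIntegral_Ioc_ofReal_le (c := (s + 1) ^ q * ψ (exp s)) (by positivity)
    fun x ⟨hsx, hxs⟩ => ?_).trans ?_
  · rw [← ENNReal.ofReal_mul (by positivity)]
    apply ENNReal.ofReal_le_ofReal
    have hpow := add_one_pow_le_two_pow_mul hs q
    have hgap : exp (s + 1) - exp s ≤ exp s * exp 1 := by rw [Real.exp_add]; linarith [exp_pos s]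
    calc (s + 1) ^ q * ψ (exp s) * (exp (s + 1) - exp s)
        ≤ 2 ^ q * s ^ q * ψ (exp s) * (exp s * exp 1) :=
          mul_le_mul (by gcongr) hgap (sub_nonneg.2 (exp_le_exp.2 (by linarith))) (by positivity)
      _ = 2 ^ q * exp 1 * (s ^ q * exp s * ψ (exp s)) := by ring
  · have hx : 0 < x := (exp_pos s).trans hsx
    have hlog : s ≤ log x := (le_log_iff_exp_le hx).2 hsx.le
    gcongr
    · exact hψ0 x (hx₀.trans hsx.le)
    · linarith
    · exact (log_le_iff_le_exp hx).2 hxs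
    · exact hψ hx₀ (hx₀.trans hsx.le) hsx.le

theorem le_lintegral_Ioc_exp_log_pow_mul {s : ℝ} (hs : 1 ≤ s) (hx₀ : x₀ ≤ exp s)
    (hψ : AntitoneOn ψ (Ici x₀)) (hψ0 : ∀ x ∈ Ici x₀, 0 ≤ ψ x) (q : ℕ) :
    ENNReal.ofReal ((s + 1) ^ q * exp (s + 1) * ψ (exp (s + 1))) ≤
      ENNReal.ofReal (2 ^ q * exp 1 / (exp 1 - 1)) *
        ∫⁻ x in Ioc (exp s) (exp (s + 1)), ENNReal.ofReal (log x ^ q * ψ x) := by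
  have he : 0 < exp 1 - 1 := by linarith [add_one_lt_exp (one_ne_zero (α := ℝ))]
  have hs₁ : x₀ ≤ exp (s + 1) := hx₀.trans (exp_le_exp.2 (by linarith))
  have hψs : 0 ≤ ψ (exp (s + 1)) := hψ0 _ hs₁
  have hlow := ofReal_le_setLIntegral_Ioc (c := s ^ q * ψ (exp (s + 1)))
    (f := fun x => log x ^ q * ψ x) (a := exp s) (b := exp (s + 1)) (by positivity)
    fun x ⟨hsx, hxs⟩ => by
      have hlog : s ≤ log x := (le_log_iff_exp_le ((exp_pos s).trans hsx)).2 hsx.le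
      exact mul_le_mul (pow_le_pow_left₀ (by linarith) hlog q) (hψ (hx₀.trans hsx.le) hs₁ hxs)
        hψs (pow_nonneg (by linarith) q)
  refine le_trans ?_ (mul_le_mul_right hlow _)
  rw [← ENNReal.ofReal_mul (by positivity)]
  apply ENNReal.ofReal_le_ofReal
  have hpow := add_one_pow_le_two_pow_mul hs q
  calc (s + 1) ^ q * exp (s + 1) * ψ (exp (s + 1))
      ≤ 2 ^ q * s ^ q * exp (s + 1) * ψ (exp (s + 1)) := by gcongr
    _ = 2 ^ q * exp 1 / (exp 1 - 1) * (s ^ q * ψ (exp (s + 1)) * (exp (s + 1) - exp s)) := by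
        rw [Real.exp_add]
        field_simp

theorem integrableOn_log_pow_mul_iff_tsum_lt_top {a : ℝ} (q : ℕ) (ha : 1 ≤ a) (hx₀ : 0 < x₀)
    (hx₀a : x₀ ≤ exp a) (hψc : ContinuousOn ψ (Ici x₀)) (hψ : AntitoneOn ψ (Ici x₀))
    (hψ0 : ∀ x ∈ Ici x₀, 0 ≤ ψ x) :
    IntegrableOn (fun x => log x ^ q * ψ x) (Ici x₀) ↔
      ∑' j : ℕ, ENNReal.ofReal ((a + j) ^ q * exp (a + j) * ψ (exp (a + j))) < ∞ := by
  have hs : ∀ j : ℕ, 1 ≤ a + j := fun j => by linarith [j.cast_nonneg (α := ℝ)]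
  have hx₀s : ∀ j : ℕ, x₀ ≤ exp (a + j) :=
    fun j => hx₀a.trans (exp_le_exp.2 (by linarith [j.cast_nonneg (α := ℝ)]))
  rw [integrableOn_Ici_iff_tsum_lintegral_Ioc_lt_top (f := fun x => log x ^ q * ψ x)
    (u := fun j : ℕ => exp (a + j))
    (fun i j hij => Real.exp_monotone (by gcongr))
    (tendsto_exp_atTop.comp (tendsto_atTop_add_const_left _ a tendsto_natCast_atTop_atTop))
    (by simpa using hx₀a)
    ((continuousOn_log.mono fun x hx => (hx₀.trans_le hx).ne').pow q |>.mul hψc)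
    fun x hx => mul_nonneg (pow_nonneg (log_nonneg ?_) q) (hψ0 x ?_)]
  · refine tsum_lt_top_iff_of_le_mul_add (E := 0) (C := ENNReal.ofReal (2 ^ q * exp 1))
      (C' := ENNReal.ofReal (2 ^ q * exp 1 / (exp 1 - 1))) ENNReal.ofReal_ne_top
      ENNReal.ofReal_ne_top ENNReal.ofReal_ne_top (by simp) (fun j => ?_) fun j => ?_
    · simpa [add_assoc] using lintegral_Ioc_exp_log_pow_mul_le (hs j) (hx₀s j) hψ hψ0 q
    · simpa [add_assoc] using le_lintegral_Ioc_exp_log_pow_mul (hs j) (hx₀s j) hψ hψ0 q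
  all_goals have hax : exp a < x := by simpa using hx
  · exact (one_le_exp (by linarith)).trans hax.le
  · exact hx₀a.trans hax.le

end LogSide

section DaniCorrespondence

variable {m n : ℝ} {r : ℝ → ℝ} {t₀ s τ τ' : ℝ} (hτ : t₀ ≤ τ) (hτ' : t₀ ≤ τ')
  (hs : τ - n * r τ = s) (hs' : τ' - n * r τ' = s + 1)
include hτ hτ' hs hs'

theorem lt_of_sub_mul_eq_add_one (hlam : MonotoneOn (fun t => t - n * r t) (Ici t₀)) : τ < τ' :=
  hlam.reflect_lt hτ hτ' (by simp only [hs, hs']; linarith)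

theorem div_add_le_sub_of_sub_mul_eq (hm : 0 < m) (hn : 0 < n)
    (hlam : MonotoneOn (fun t => t - n * r t) (Ici t₀))
    (hL : MonotoneOn (fun t => t + m * r t) (Ici t₀)) :
    m / (m + n) ≤ τ' - τ := by
  have hLττ' : τ + m * r τ ≤ τ' + m * r τ' :=
    hL hτ hτ' (lt_of_sub_mul_eq_add_one hτ hτ' hs hs' hlam).le
  rw [div_le_iff₀ (by positivity)]
  nlinarith

theorem lintegral_Ioc_pow_mul_exp_le (hm : 0 < m) (hn : 0 < n)
    (hlam : MonotoneOn (fun t => t - n * r t) (Ici t₀)) (hs₁ : 1 ≤ s) (hτ₀ : 0 ≤ τ) (q : ℕ) :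
    ∫⁻ t in Ioc τ τ', ENNReal.ofReal (t ^ q * exp (-(m + n) * r t)) ≤
      ENNReal.ofReal (2 ^ (q + 1) * q ! * exp (2 + m / n) * (8 ^ q * q !)) *
        (ENNReal.ofReal (s ^ q * exp (s - (τ + m * r τ))) + ENNReal.ofReal (exp (-s))) := by
  set Lτ := τ + m * r τ
  set K := 2 ^ q * q ! * exp (2 + m / n) * (τ + 1) ^ q * exp (s - Lτ)
  have hpt : ∀ t ∈ Ioc τ τ', t ^ q * exp (-(m + n) * r t) ≤ K * exp ((τ - t) / 2) := by
    rintro t ⟨hτt, htτ'⟩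
    have hlamt : t - n * r t ≤ s + 1 := hs' ▸ hlam (hτ.trans hτt.le) hτ' htτ'
    -- `(m + n) (t - τ) = m (λ t - s) + n (L t - L τ)` with `λ t ≤ s + 1`
    have hexp : -(m + n) * r t ≤ (s + 1 + m / n - Lτ) + (τ - t) := by
      have h : n * (-(m + n) * r t) ≤ n * ((s + 1 + m / n - Lτ) + (τ - t)) := by
        rw [mul_add, mul_sub, mul_add, mul_div_cancel₀ _ hn.ne']
        nlinarith
      exact le_of_mul_le_mul_left h hn
    calc t ^ q * exp (-(m + n) * r t) ≤ t ^ q * exp (τ - t) * exp (s + 1 + m / n - Lτ) := by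
          rw [mul_assoc, ← Real.exp_add, add_comm (τ - t)]
          have : 0 ≤ t := by linarith
          gcongr
      _ ≤ 2 ^ q * q ! * exp 1 * (τ + 1) ^ q * exp ((τ - t) / 2) * exp (s + 1 + m / n - Lτ) :=
          mul_le_mul_of_nonneg_right (pow_mul_exp_sub_le hτ₀ hτt.le q) (exp_pos _).le
      _ = K * exp ((τ - t) / 2) := by
          simp only [K, show 2 + m / n = 1 + 1 + m / n by ring, Real.exp_add,
            show s + 1 + m / n - Lτ = s - Lτ + 1 + m / n by ring]
          ring
  have hτmax : τ ≤ max s Lτ := by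
    have hconv : (m + n) * τ = m * s + n * Lτ := by rw [← hs]; ring
    rcases le_total s Lτ with h | h
    · rw [max_eq_right h]; nlinarith
    · rw [max_eq_left h]; nlinarith
  have hK : 0 ≤ K := by positivity
  calc ∫⁻ t in Ioc τ τ', ENNReal.ofReal (t ^ q * exp (-(m + n) * r t))
      ≤ ∫⁻ t in Ioi τ, ENNReal.ofReal K * ENNReal.ofReal (exp ((τ - t) / 2)) := by
        refine (setLIntegral_mono' measurableSet_Ioc fun t ht => ?_).trans
          (lintegral_mono_set Ioc_subset_Ioi_self)
        rw [← ENNReal.ofReal_mul hK]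
        exact ENNReal.ofReal_le_ofReal (hpt t ht)
    _ = ENNReal.ofReal (K * 2) := by
        rw [lintegral_const_mul' _ _ ENNReal.ofReal_ne_top, lintegral_Ioi_exp_sub_div_two,
          ENNReal.ofReal_mul hK, ENNReal.ofReal_ofNat]
    _ ≤ _ := by
        rw [← ENNReal.ofReal_add (by positivity) (by positivity),
          ← ENNReal.ofReal_mul (by positivity)]
        apply ENNReal.ofReal_le_ofReal
        have hcase := add_one_pow_mul_exp_sub_le hs₁ hτ₀ hτmax q
        calc K * 2 = 2 ^ (q + 1) * q ! * exp (2 + m / n) * ((τ + 1) ^ q * exp (s - Lτ)) := by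
              simp only [K]; ring
          _ ≤ _ := by rw [mul_assoc _ (8 ^ q * _)]; gcongr

theorem le_lintegral_Ioc_pow_mul_exp (hm : 0 < m) (hn : 0 < n)
    (hlam : MonotoneOn (fun t => t - n * r t) (Ici t₀))
    (hL : MonotoneOn (fun t => t + m * r t) (Ici t₀)) (hs₀ : 0 ≤ s)
    (hτs : m * (s + 1) ≤ 2 * (m + n) * τ) (q : ℕ) :
    ENNReal.ofReal ((s + 1) ^ q * exp (s + 1 - (τ' + m * r τ'))) ≤
      ENNReal.ofReal ((2 * (m + n) / m) ^ q * exp 1 * ((m + n) / m)) *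
        ∫⁻ t in Ioc τ τ', ENNReal.ofReal (t ^ q * exp (-(m + n) * r t)) := by
  set Lτ' := τ' + m * r τ'
  have hτ₀ : 0 ≤ τ := by nlinarith
  have hlow := ofReal_le_setLIntegral_Ioc (c := τ ^ q * exp (s - Lτ'))
    (f := fun t => t ^ q * exp (-(m + n) * r t)) (a := τ) (b := τ') (by positivity) <| by
      rintro t ⟨hτt, htτ'⟩
      have ht : t₀ ≤ t := hτ.trans hτt.le
      have hlamt : s ≤ t - n * r t := hs ▸ hlam hτ ht hτt.le
      have hLt : t + m * r t ≤ Lτ' := hL ht hτ' htτ'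
      have : 0 ≤ t := by linarith
      gcongr
      linarith
  refine le_trans ?_ (mul_le_mul_right hlow _)
  rw [← ENNReal.ofReal_mul (by positivity)]
  apply ENNReal.ofReal_le_ofReal
  have hgap := div_add_le_sub_of_sub_mul_eq hτ hτ' hs hs' hm hn hlam hL
  have hpow : (s + 1) ^ q ≤ (2 * (m + n) / m) ^ q * τ ^ q := by
    rw [← mul_pow]
    refine pow_le_pow_left₀ (by linarith) ?_ q
    rw [div_mul_eq_mul_div, le_div_iff₀ hm]
    linarith
  have hgap' : 1 ≤ (m + n) / m * (τ' - τ) := by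
    rwa [div_mul_eq_mul_div, le_div_iff₀ hm, one_mul, ← div_le_iff₀' (by positivity)]
  calc (s + 1) ^ q * exp (s + 1 - Lτ')
      = (s + 1) ^ q * exp (s - Lτ') * exp 1 * 1 := by
        rw [mul_one, mul_assoc, ← Real.exp_add]; ring_nf
    _ ≤ (2 * (m + n) / m) ^ q * τ ^ q * exp (s - Lτ') * exp 1 * ((m + n) / m * (τ' - τ)) := by
        gcongr
    _ = _ := by ring

end DaniCorrespondence

theorem integrableOn_pow_mul_exp_iff_tsum_lt_top {m n : ℝ} {r : ℝ → ℝ} {t₀ a : ℝ} {τ : ℕ → ℝ}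
    (hm : 0 < m) (hn : 0 < n) (hr : ContinuousOn r (Ici t₀))
    (hlam : MonotoneOn (fun t => t - n * r t) (Ici t₀))
    (hL : MonotoneOn (fun t => t + m * r t) (Ici t₀)) (ha : 1 ≤ a)
    (haL : m ≤ m * a + 2 * n * (t₀ + m * r t₀)) (hτ₀ : ∀ j, t₀ ≤ τ j)
    (hτ : ∀ j : ℕ, τ j - n * r (τ j) = a + j) (q : ℕ) :
    IntegrableOn (fun t => t ^ q * exp (-(m + n) * r t)) (Ici t₀) ↔
      ∑' j : ℕ, ENNReal.ofReal ((a + j) ^ q * exp (a + j - (τ j + m * r (τ j)))) < ∞ := by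
  have hs₁ : ∀ j : ℕ, 1 ≤ a + j := fun j => by linarith [j.cast_nonneg (α := ℝ)]
  have hτsucc : ∀ j : ℕ, τ (j + 1) - n * r (τ (j + 1)) = a + j + 1 := fun j => by
    rw [hτ]; push_cast; ring
  have hτlow : ∀ j : ℕ, m * (a + j + 1) ≤ 2 * (m + n) * τ j := fun j => by
    have hLj : t₀ + m * r t₀ ≤ τ j + m * r (τ j) := hL self_mem_Ici (hτ₀ j) (hτ₀ j)
    have := hτ j
    nlinarith [j.cast_nonneg (α := ℝ)]
  have hτpos : ∀ j, 0 ≤ τ j := fun j => by nlinarith [hτlow j, hs₁ j]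
  have hτmono : Monotone τ := monotone_nat_of_le_succ fun j =>
    (lt_of_sub_mul_eq_add_one (hτ₀ j) (hτ₀ (j + 1)) (hτ j) (hτsucc j) hlam).le
  have hτtop : Tendsto τ atTop atTop := by
    refine tendsto_atTop_mono (fun j => (div_le_iff₀' (by positivity)).2 (hτlow j)) ?_
    exact ((tendsto_atTop_add_const_right _ 1 (tendsto_atTop_add_const_left _ a
      tendsto_natCast_atTop_atTop)).const_mul_atTop hm).atTop_div_const (by positivity)
  rw [integrableOn_Ici_iff_tsum_lintegral_Ioc_lt_top
    (f := fun t => t ^ q * exp (-(m + n) * r t)) hτmono hτtop (hτ₀ 0)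
    ((continuousOn_id.pow q).mul (continuous_exp.comp_continuousOn (continuousOn_const.mul hr)))
    fun t ht => mul_nonneg (pow_nonneg ((hτpos 0).trans (le_of_lt ht)) q) (exp_pos _).le]
  refine tsum_lt_top_iff_of_le_mul_add (E := fun j => ENNReal.ofReal (exp (-(a + j))))
    (C := ENNReal.ofReal (2 ^ (q + 1) * q ! * exp (2 + m / n) * (8 ^ q * q !)))
    (C' := ENNReal.ofReal ((2 * (m + n) / m) ^ q * exp 1 * ((m + n) / m)))
    ENNReal.ofReal_ne_top ENNReal.ofReal_ne_top ENNReal.ofReal_ne_top ?_ (fun j => ?_) fun j => ?_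
  · rw [← ENNReal.ofReal_tsum_of_nonneg (fun _ => (exp_pos _).le)]
    · exact ENNReal.ofReal_ne_top
    · simpa [neg_add, Real.exp_add] using Real.summable_exp_neg_nat.mul_right (exp (-a))
  · simpa using lintegral_Ioc_pow_mul_exp_le (hτ₀ j) (hτ₀ (j + 1)) (hτ j) (hτsucc j) hm hn hlam
      (hs₁ j) (hτpos j) q
  · simpa [add_assoc] using le_lintegral_Ioc_pow_mul_exp (hτ₀ j) (hτ₀ (j + 1)) (hτ j) (hτsucc j)
      hm hn hlam hL (by linarith [hs₁ j]) (hτlow j) q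

/-- The `furthermore' part of Lemma 8.3: equivalence of convergence of the two integrals
under the Dani correspondence. -/
theorem stmt_10 (m n : ℕ) (hm : 1 ≤ m) (hn : 1 ≤ n) (q : ℕ) (x₀ t₀ : ℝ)
    (ψ r : ℝ → ℝ)
    (hcont : ContinuousOn ψ (Ici x₀)) (hanti : AntitoneOn ψ (Ici x₀))
    (hpos : ∀ x ∈ Ici x₀, 0 < ψ x)
    (hrcont : ContinuousOn r (Ici t₀))
    (hlam : StrictMonoOn (fun t => t - n * r t) (Ici t₀))
    (hlaminf : Tendsto (fun t => t - n * r t) atTop atTop)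
    (hL : MonotoneOn (fun t => t + m * r t) (Ici t₀))
    (hx₀ : x₀ = Real.exp (t₀ - n * r t₀))
    (heq : ∀ t ∈ Ici t₀, ψ (Real.exp (t - n * r t)) = Real.exp (-t - m * r t)) :
    IntegrableOn (fun x => (Real.log x) ^ q * ψ x) (Ici x₀) ↔
    IntegrableOn (fun t => t ^ q * Real.exp (-((m : ℝ) + n) * r t)) (Ici t₀) := by
  have hm' : (0 : ℝ) < m := by exact_mod_cast hm
  have hn' : (0 : ℝ) < n := by exact_mod_cast hn
  set a : ℝ := max (t₀ - n * r t₀) 1 + 2 * n * |t₀ + m * r t₀| / m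
  have ha : max (t₀ - n * r t₀) 1 ≤ a := le_add_of_nonneg_right (by positivity)
  have haL : (m : ℝ) ≤ m * a + 2 * n * (t₀ + m * r t₀) := by
    have : m * a = m * max (t₀ - n * r t₀) 1 + 2 * n * |t₀ + m * r t₀| := by
      simp only [a]; field_simp
    nlinarith [le_max_right (t₀ - n * r t₀) 1, neg_abs_le (t₀ + m * r t₀)]
  have hpre : ∀ j : ℕ, ∃ t, t₀ ≤ t ∧ t - n * r t = a + j := fun j =>
    intermediate_value_Ici (continuousOn_id.sub (continuousOn_const.mul hrcont)) hlaminf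
      (show t₀ - n * r t₀ ≤ a + j by
        linarith [le_max_left (t₀ - n * r t₀) 1, j.cast_nonneg (α := ℝ)])
  choose τ hτ₀ hτ using hpre
  have hψ : ∀ j : ℕ, ψ (exp (a + j)) = exp (-(τ j + m * r (τ j))) := fun j => by
    rw [← hτ j, heq _ (hτ₀ j), neg_add']
  rw [integrableOn_log_pow_mul_iff_tsum_lt_top q ((le_max_right _ _).trans ha) (hx₀ ▸ exp_pos _)
      (hx₀ ▸ exp_le_exp.2 ((le_max_left _ _).trans ha)) hcont hanti fun x hx => (hpos x hx).le,
    integrableOn_pow_mul_exp_iff_tsum_lt_top hm' hn' hrcont hlam.monotoneOn hL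
      ((le_max_right _ _).trans ha) haL hτ₀ hτ q]
  simp_rw [hψ, mul_assoc, ← Real.exp_add, ← sub_eq_add_neg]
end

section
/- Let m, n ∈ ℕ, k = m+n. For A ∈ M_{m,n}(ℝ) let Λ_A = {(Aq + p, q) : p ∈ ℤ^m, q ∈ ℤ^n} ⊂ ℝ^k. For v ∈ ℝ^k write v^(m) for the first m coordinates and v_(n) for the last n, and let ‖·‖ be the sup norm. Let ψ : [x₀,∞) → (0,∞) be non-increasing continuous and r : [t₀,∞) → ℝ the function from the Dani correspondence (so λ(t) = t − nr(t) is strictly increasing to ∞, L(t) = t + mr(t) is non-decreasing, and ψ(e^{t−nr(t)}) = e^{−t−mr(t)}). Let f_t = diag(e^{t/m},…,e^{t/m}, e^{−t/n},…,e^{−t/n}) (m entries e^{t/m}, n entries e^{−t/n}), and for a lattice Λ ⊂ ℝ^k set Δ(Λ) = max_{v ∈ Λ∖{0}} log(1/‖v‖). Then a unimodular lattice Λ ⊂ ℝ^k has vectors v ∈ Λ with arbitrarily large ‖v_(n)‖ satisfying ‖v^(m)‖^m ≤ ψ(‖v_(n)‖^n) if and only if there exist arbitrarily large t > 0 with Δ(f_t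 Λ) ≥ r(t). -/
/-!
Write `v = (v^(m), v_(n))` and `λ(t) = t - n r(t)`. For `v ≠ 0`, `‖f_t v‖ ≤ e^{-r(t)}` says exactly
`‖v^(m)‖^m ≤ e^{-t-m r(t)} = ψ(e^{λ(t)})` and `‖v_(n)‖^n ≤ e^{λ(t)}`; as `f_t Λ` has a shortest
nonzero vector, `Δ(f_t Λ) ≥ r(t)` means that such a `v ∈ Λ` exists. Because `λ` and
`L(t) = t + m r(t)` are both nondecreasing, `λ` is Lipschitz, hence continuous, and takes every
large value: a ψ-approximation `v` is a witness at the time `t` with `e^{λ(t)} = ‖v_(n)‖^n`.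

Conversely a witness `v` at time `t` satisfies the ψ-inequality as soon as `‖v_(n)‖^n ≥ x₀`, so
what has to be shown is that `‖v_(n)‖` can be made large. A lattice has finitely many points in
a box, so unless some nonzero `v ∈ Λ` has `v^(m) = 0` (then its multiples do), a small enough
`‖v^(m)‖` forces a large `‖v_(n)‖`. If `L` is unbounded, `‖v^(m)‖^m ≤ e^{-L(t)}` is small for
suitable `t`; if `L` is bounded, then `ψ ≥ e^{-sup L}` and Minkowski's theorem gives lattice
vectors with arbitrarily small `‖v^(m)‖`.
-/

open Filter Set Real MeasureTheory Topology
open scoped Matrix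

theorem continuousOn_sub_mul_of_monotoneOn {r : ℝ → ℝ} {s : Set ℝ} {a b : ℝ} (ha : 0 < a)
    (hb : 0 ≤ b) (hf : MonotoneOn (fun t => t - b * r t) s)
    (hL : MonotoneOn (fun t => t + a * r t) s) :
    ContinuousOn (fun t => t - b * r t) s := by
  refine (LipschitzOnWith.of_le_add_mul' (1 + b / a) fun x hx y hy => ?_).continuousOn
  rcases le_total x y with hxy | hyx
  · have hfxy := hf hx hy hxy
    have hK : 0 ≤ (1 + b / a) * dist x y := by positivity
    linarith
  · have hLyx : y + a * r y ≤ x + a * r x := hL hy hx hyx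
    rw [Real.dist_eq, abs_of_nonneg (sub_nonneg.2 hyx)]
    have hr : b * (r y - r x) ≤ b / a * (x - y) := by
      rw [div_mul_eq_mul_div, le_div_iff₀ ha]
      nlinarith
    linarith

theorem le_exp_div_iff_pow_le {x a : ℝ} {k : ℕ} (hk : k ≠ 0) (hx : 0 ≤ x) :
    x ≤ exp (a / k) ↔ x ^ k ≤ exp a := by
  rw [← pow_le_pow_iff_left₀ hx (exp_pos _).le hk, ← exp_nat_mul,
    mul_div_cancel₀ _ (Nat.cast_ne_zero.2 hk)]

theorem le_pow_of_max_one_le {x b : ℝ} {n : ℕ} (hn : n ≠ 0) (h : max 1 x ≤ b) : x ≤ b ^ n :=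
  (le_max_right _ _).trans (h.trans (le_self_pow₀ ((le_max_left _ _).trans h) hn))

theorem norm_intCast_pi {k : ℕ} (p : Fin k → ℤ) : ‖fun i => (p i : ℝ)‖ = ‖p‖ := by
  simp only [Pi.norm_def]
  congr 2

theorem tendsto_norm_mulVec_intCast_cofinite {k : ℕ} {g : Matrix (Fin k) (Fin k) ℝ}
    (hg : IsUnit g.det) :
    Tendsto (fun p : Fin k → ℤ => ‖g *ᵥ fun i => (p i : ℝ)‖) cofinite atTop := by
  set A := LinearMap.toContinuousLinearMap (Matrix.mulVecLin g⁻¹)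
  have hC : 0 < ‖A‖ + 1 := by positivity
  have hbound (x : Fin k → ℝ) : ‖x‖ / (‖A‖ + 1) ≤ ‖g *ᵥ x‖ := by
    rw [div_le_iff₀ hC]
    calc ‖x‖ = ‖A (g *ᵥ x)‖ := by
          simp [A, Matrix.mulVec_mulVec, Matrix.nonsing_inv_mul g hg]
      _ ≤ ‖A‖ * ‖g *ᵥ x‖ := A.le_opNorm _
      _ ≤ ‖g *ᵥ x‖ * (‖A‖ + 1) := by nlinarith [norm_nonneg A, norm_nonneg (g *ᵥ x)]
  have hZ : Tendsto (fun p : Fin k → ℤ => ‖p‖) cofinite atTop :=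
    cocompact_eq_cofinite (Fin k → ℤ) ▸ tendsto_norm_cocompact_atTop
  refine tendsto_atTop_mono (fun p => hbound _) ?_
  simpa only [norm_intCast_pi] using hZ.atTop_div_const hC

theorem pi_norm_mul_pos {k : ℕ} {d v : Fin k → ℝ} (hd : ∀ i, 0 < d i) (hv : v ≠ 0) :
    0 < ‖fun i => d i * v i‖ :=
  norm_pos_iff.2 fun h => hv <| funext fun i => by
    simpa [(hd i).ne'] using congrFun h i

def intLattice {k : ℕ} (g : Matrix (Fin k) (Fin k) ℝ) : Set (Fin k → ℝ) :=
  {v | ∃ p : Fin k → ℤ, v = g.mulVec fun i => (p i : ℝ)}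

namespace intLattice

variable {k : ℕ} {g : Matrix (Fin k) (Fin k) ℝ}

theorem nsmul_mem {v : Fin k → ℝ} (hv : v ∈ intLattice g) (N : ℕ) : N • v ∈ intLattice g := by
  obtain ⟨p, rfl⟩ := hv
  refine ⟨N • p, ?_⟩
  rw [show (fun i => ((N • p) i : ℝ)) = N • fun i => (p i : ℝ) by ext; simp, Matrix.mulVec_smul]

theorem exists_ne_zero_abs_le (hg : IsUnit g.det) {c : Fin k → ℝ} (hc : ∀ i, 0 ≤ c i)
    (hdet : |g.det| < ∏ i, c i) : ∃ v ∈ intLattice g, v ≠ 0 ∧ ∀ i, |v i| ≤ c i := by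
  let b : Module.Basis (Fin k) ℝ (Fin k → ℝ) :=
    (Pi.basisFun ℝ (Fin k)).map (g.toLinearEquiv' (g.invertibleOfIsUnitDet hg))
  have hb : ∀ i j, b i j = g j i := by
    intro i j
    simp [b, Matrix.toLinearEquiv', Matrix.mulVec, dotProduct, Pi.single_apply]
  have hvol : volume (ZSpan.fundamentalDomain b) = ENNReal.ofReal |g.det| := by
    rw [ZSpan.volume_fundamentalDomain, show Matrix.of b = gᵀ from Matrix.ext hb,
      Matrix.det_transpose]
  let s : Set (Fin k → ℝ) := univ.pi fun i => Icc (-c i) (c i)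
  have hs : volume s = ENNReal.ofReal (2 ^ k * ∏ i, c i) := by
    rw [volume_pi_pi]
    simp_rw [Real.volume_Icc, sub_neg_eq_add, ← two_mul]
    rw [← ENNReal.ofReal_prod_of_nonneg fun i _ => by linarith [hc i], Finset.prod_mul_distrib]
    simp
  have hlt : volume (ZSpan.fundamentalDomain b) * 2 ^ Module.finrank ℝ (Fin k → ℝ) < volume s := by
    rw [hvol, hs, Module.finrank_fin_fun, ENNReal.ofReal_mul (by positivity),
      ENNReal.ofReal_pow zero_le_two, ENNReal.ofReal_ofNat, mul_comm]
    exact ENNReal.mul_lt_mul_right (by positivity) (by simp)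
      ((ENNReal.ofReal_lt_ofReal_iff ((abs_nonneg _).trans_lt hdet)).2 hdet)
  have hsymm : ∀ x ∈ s, -x ∈ s := fun x hx i _ =>
    ⟨neg_le_neg (hx i trivial).2, by simpa using neg_le_neg (hx i trivial).1⟩
  have : Countable (Submodule.span ℤ (range b)).toAddSubgroup :=
    inferInstanceAs (Countable (Submodule.span ℤ (range b)))
  obtain ⟨⟨x, hxL⟩, hx0, hxs⟩ := exists_ne_zero_mem_lattice_of_measure_mul_two_pow_lt_measure
    (ZSpan.isAddFundamentalDomain' b volume) hsymm (convex_pi fun i _ => convex_Icc _ _) hlt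
  obtain ⟨p, rfl⟩ := (Submodule.mem_span_range_iff_exists_fun ℤ).1 hxL
  refine ⟨_, ⟨p, ?_⟩, by simpa using hx0, fun i => abs_le.2 (hxs i trivial)⟩
  ext j
  simp [Matrix.mulVec, dotProduct, hb, mul_comm]

theorem exists_forall_norm_mul_le [NeZero k] (hg : IsUnit g.det) {d : Fin k → ℝ}
    (hd : ∀ i, 0 < d i) :
    ∃ w ∈ intLattice g, w ≠ 0 ∧
      ∀ v ∈ intLattice g, v ≠ 0 → ‖fun i => d i * w i‖ ≤ ‖fun i => d i * v i‖ := by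
  set D := Matrix.diagonal d * g
  have hD : IsUnit D.det := by
    rw [Matrix.det_mul, Matrix.det_diagonal]
    exact (Finset.prod_pos fun i _ => hd i).ne'.isUnit.mul hg
  have hDg (x : Fin k → ℝ) : D *ᵥ x = fun i => d i * (g *ᵥ x) i := by
    ext i
    simp [D, ← Matrix.mulVec_mulVec, Matrix.mulVec_diagonal]
  have hinj : Function.Injective (Matrix.mulVec g) :=
    Matrix.mulVec_injective_iff_isUnit.2 ((Matrix.isUnit_iff_isUnit_det g).2 hg)
  have : Nonempty {p : Fin k → ℤ // p ≠ 0} := ⟨⟨1, one_ne_zero⟩⟩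
  obtain ⟨⟨p, hp⟩, hmin⟩ := ((tendsto_norm_mulVec_intCast_cofinite hD).comp
    (Subtype.val_injective (p := fun p : Fin k → ℤ => p ≠ 0)).tendsto_cofinite).exists_forall_le
  refine ⟨_, ⟨p, rfl⟩, fun h => hp ?_, ?_⟩
  · ext i
    simpa using congrFun (hinj (h.trans (Matrix.mulVec_zero g).symm)) i
  rintro _ ⟨q, rfl⟩ hq
  have hq' : q ≠ 0 := by
    rintro rfl
    simp only [Pi.zero_apply, Int.cast_zero] at hq
    exact hq (Matrix.mulVec_zero g)
  simpa [hDg] using hmin ⟨q, hq'⟩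

theorem le_sSup_neg_log_norm_mul_iff [NeZero k] (hg : IsUnit g.det) {d : Fin k → ℝ}
    (hd : ∀ i, 0 < d i) (s : ℝ) :
    s ≤ sSup {z | ∃ v ∈ intLattice g, v ≠ 0 ∧ z = -log ‖fun i => d i * v i‖} ↔
      ∃ v ∈ intLattice g, v ≠ 0 ∧ ‖fun i => d i * v i‖ ≤ exp (-s) := by
  obtain ⟨w, hw, hw0, hmin⟩ := exists_forall_norm_mul_le hg hd
  have hmax : IsGreatest {z | ∃ v ∈ intLattice g, v ≠ 0 ∧ z = -log ‖fun i => d i * v i‖}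
      (-log ‖fun i => d i * w i‖) := by
    refine ⟨⟨w, hw, hw0, rfl⟩, ?_⟩
    rintro _ ⟨v, hv, hv0, rfl⟩
    exact neg_le_neg (log_le_log (pi_norm_mul_pos hd hw0) (hmin v hv hv0))
  rw [hmax.csSup_eq]
  constructor
  · intro h
    refine ⟨w, hw, hw0, ?_⟩
    rw [← log_le_iff_le_exp (pi_norm_mul_pos hd hw0)]
    linarith
  · rintro ⟨v, hv, hv0, hle⟩
    have := (log_le_iff_le_exp (pi_norm_mul_pos hd hv0)).2 hle
    linarith [hmax.2 ⟨v, hv, hv0, rfl⟩]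

end intLattice

section Blocks

variable {m n : ℕ}

theorem norm_le_iff_castAdd_natAdd {v : Fin (m + n) → ℝ} {c : ℝ} (hc : 0 ≤ c) :
    ‖v‖ ≤ c ↔ ‖fun i : Fin m => v (Fin.castAdd n i)‖ ≤ c ∧
      ‖fun j : Fin n => v (Fin.natAdd m j)‖ ≤ c := by
  simp only [pi_norm_le_iff_of_nonneg hc, Fin.forall_fin_add]

theorem norm_flow_le_exp_neg_iff (hm : m ≠ 0) (hn : n ≠ 0) (t s : ℝ) (v : Fin (m + n) → ℝ) :
    ‖fun i : Fin (m + n) => (if (i : ℕ) < m then exp (t / m) else exp (-t / n)) * v i‖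
        ≤ exp (-s) ↔
      ‖fun i : Fin m => v (Fin.castAdd n i)‖ ^ m ≤ exp (-t - m * s) ∧
      ‖fun j : Fin n => v (Fin.natAdd m j)‖ ^ n ≤ exp (t - n * s) := by
  have hm' : (m : ℝ) ≠ 0 := Nat.cast_ne_zero.2 hm
  have hn' : (n : ℝ) ≠ 0 := Nat.cast_ne_zero.2 hn
  rw [norm_le_iff_castAdd_natAdd (exp_pos _).le]
  simp only [Fin.val_castAdd, Fin.val_natAdd, Fin.is_lt, if_true, add_lt_iff_neg_left,
    not_lt_zero, if_false]
  change ‖exp (t / m) • fun i : Fin m => v (Fin.castAdd n i)‖ ≤ _ ∧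
    ‖exp (-t / n) • fun j : Fin n => v (Fin.natAdd m j)‖ ≤ _ ↔ _
  rw [norm_smul, norm_smul, norm_of_nonneg (exp_pos _).le, norm_of_nonneg (exp_pos _).le,
    ← le_div_iff₀' (exp_pos _), ← le_div_iff₀' (exp_pos _), ← exp_sub, ← exp_sub,
    ← le_exp_div_iff_pow_le hm (norm_nonneg _), ← le_exp_div_iff_pow_le hn (norm_nonneg _)]
  congr! 3 <;> field_simp <;> ring

namespace intLattice

variable {g : Matrix (Fin (m + n)) (Fin (m + n)) ℝ}

theorem exists_ne_zero_norm_fst_le (hn : n ≠ 0) (hg : IsUnit g.det) {δ : ℝ} (hδ : 0 < δ) :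
    ∃ v ∈ intLattice g, v ≠ 0 ∧ ‖fun i : Fin m => v (Fin.castAdd n i)‖ ≤ δ := by
  set β := |g.det| / δ ^ m + 1
  have hβ : |g.det| / δ ^ m < β ^ n :=
    (lt_add_one _).trans_le (le_self_pow₀ (le_add_of_nonneg_left (by positivity)) hn)
  set c : Fin (m + n) → ℝ := Fin.append (fun _ : Fin m => δ) (fun _ : Fin n => β)
  have hc : ∀ i, 0 ≤ c i := Fin.addCases (fun _ => by simp [c, hδ.le])
    (fun _ => by simp only [c, Fin.append_right]; positivity)
  have hprod : ∏ i, c i = δ ^ m * β ^ n := by simp [c, Fin.prod_univ_add]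
  obtain ⟨v, hv, hv0, hvc⟩ :=
    exists_ne_zero_abs_le hg hc (hprod ▸ (div_lt_iff₀' (pow_pos hδ m)).1 hβ)
  exact ⟨v, hv, hv0, (pi_norm_le_iff_of_nonneg hδ.le).2 fun i => by
    simpa [c] using hvc (Fin.castAdd n i)⟩

theorem exists_pos_forall_norm_fst_le (hg : IsUnit g.det)
    (h0 : ∀ v ∈ intLattice g, v ≠ 0 → (fun i : Fin m => v (Fin.castAdd n i)) ≠ 0) (R : ℝ) :
    ∃ ε > 0, ∀ v ∈ intLattice g, v ≠ 0 → ‖fun i : Fin m => v (Fin.castAdd n i)‖ ≤ ε →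
      R < ‖fun j : Fin n => v (Fin.natAdd m j)‖ := by
  set F := {p : Fin (m + n) → ℤ | ‖g *ᵥ fun i => (p i : ℝ)‖ ≤ max 1 R}
  have hF : F.Finite := by
    simpa only [not_lt] using eventually_cofinite.1
      ((tendsto_norm_mulVec_intCast_cofinite hg).eventually_gt_atTop (max 1 R))
  have hev : ∀ᶠ ε in 𝓝[>] (0 : ℝ), 0 < ε ∧ ε < 1 ∧ ∀ p ∈ F, (g *ᵥ fun i => (p i : ℝ)) ≠ 0 →
      ε < ‖fun i : Fin m => (g *ᵥ fun i => (p i : ℝ)) (Fin.castAdd n i)‖ := by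
    refine (eventually_mem_nhdsWithin (s := Ioi 0)).and
      (((eventually_lt_nhds one_pos).filter_mono nhdsWithin_le_nhds).and ?_)
    refine (eventually_all_finite hF).2 fun p _ => ?_
    by_cases hp : (g *ᵥ fun i => (p i : ℝ)) = 0
    · exact .of_forall fun _ h => absurd hp h
    · exact ((eventually_lt_nhds (norm_pos_iff.2 (h0 _ ⟨p, rfl⟩ hp))).filter_mono
        nhdsWithin_le_nhds).mono fun _ h _ => h
  obtain ⟨ε, hε, hε1, hεF⟩ := hev.exists
  refine ⟨ε, hε, ?_⟩
  rintro _ ⟨p, rfl⟩ hv0 hvε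
  by_contra! hR
  have hp : p ∈ F := (norm_le_iff_castAdd_natAdd (zero_le_one.trans (le_max_left _ _))).2
    ⟨hvε.trans (hε1.le.trans (le_max_left _ _)), hR.trans (le_max_right _ _)⟩
  exact (hεF p hp hv0).not_ge hvε

theorem le_sSup_neg_log_norm_flow_iff (hm : m ≠ 0) (hn : n ≠ 0) (hg : IsUnit g.det) (t s : ℝ) :
    s ≤ sSup {z | ∃ v ∈ intLattice g, v ≠ 0 ∧ z = -log
        ‖fun i : Fin (m + n) => (if (i : ℕ) < m then exp (t / m) else exp (-t / n)) * v i‖} ↔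
      ∃ v ∈ intLattice g, v ≠ 0 ∧
        ‖fun i : Fin m => v (Fin.castAdd n i)‖ ^ m ≤ exp (-t - m * s) ∧
        ‖fun j : Fin n => v (Fin.natAdd m j)‖ ^ n ≤ exp (t - n * s) := by
  have : NeZero (m + n) := ⟨by omega⟩
  rw [le_sSup_neg_log_norm_mul_iff hg fun i => by split_ifs <;> exact exp_pos _]
  simp_rw [norm_flow_le_exp_neg_iff hm hn]

end intLattice

end Blocks

def PsiApproximable (m n : ℕ) (ψ : ℝ → ℝ) (Λ : Set (Fin (m + n) → ℝ)) : Prop :=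
  ∀ R : ℝ, ∃ v ∈ Λ, R ≤ ‖fun j : Fin n => v (Fin.natAdd m j)‖ ∧
    ‖fun i : Fin m => v (Fin.castAdd n i)‖ ^ m ≤ ψ (‖fun j : Fin n => v (Fin.natAdd m j)‖ ^ n)

-- For `Λ = intLattice g` this is `Δ(f_t Λ) ≥ r(t)` for arbitrarily large `t`, by
-- `intLattice.le_sSup_neg_log_norm_flow_iff`.
def HasExcursions (m n : ℕ) (r : ℝ → ℝ) (Λ : Set (Fin (m + n) → ℝ)) : Prop :=
  ∀ T : ℝ, ∃ t : ℝ, T ≤ t ∧ 0 < t ∧ ∃ v ∈ Λ, v ≠ 0 ∧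
    ‖fun i : Fin m => v (Fin.castAdd n i)‖ ^ m ≤ exp (-t - m * r t) ∧
    ‖fun j : Fin n => v (Fin.natAdd m j)‖ ^ n ≤ exp (t - n * r t)

section Approximation

variable {m n : ℕ} {ψ r : ℝ → ℝ} {x₀ t₀ : ℝ} {Λ : Set (Fin (m + n) → ℝ)}

theorem psiApproximable_of_eventually
    (h : ∀ᶠ R in atTop, ∃ v ∈ Λ, R ≤ ‖fun j : Fin n => v (Fin.natAdd m j)‖ ∧
      ‖fun i : Fin m => v (Fin.castAdd n i)‖ ^ m ≤ ψ (‖fun j : Fin n => v (Fin.natAdd m j)‖ ^ n)) :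
    PsiApproximable m n ψ Λ := fun R₀ =>
  have ⟨_, ⟨v, hv, hR, hψ⟩, hR₀⟩ := (h.and (eventually_ge_atTop R₀)).exists
  ⟨v, hv, hR₀.trans hR, hψ⟩

theorem hasExcursions_of_psiApproximable (hn : n ≠ 0)
    (hcont : ContinuousOn (fun t => t - n * r t) (Ici t₀))
    (htop : Tendsto (fun t => t - n * r t) atTop atTop)
    (heq : ∀ t ∈ Ici t₀, ψ (exp (t - n * r t)) = exp (-t - m * r t))
    (h : PsiApproximable m n ψ Λ) : HasExcursions m n r Λ := by
  intro T
  set T' := max (max T t₀) 1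
  obtain ⟨v, hv, hR, hψv⟩ := h (max 1 (exp (T' - n * r T')))
  set b := ‖fun j : Fin n => v (Fin.natAdd m j)‖
  have hb : b ≤ b ^ n := le_self_pow₀ ((le_max_left _ _).trans hR) hn
  have hbpos : 0 < b ^ n := one_pos.trans_le ((le_max_left _ _).trans (hR.trans hb))
  obtain ⟨t, ht, hlt : t - n * r t = log (b ^ n)⟩ := intermediate_value_Ici
    (hcont.mono (Ici_subset_Ici.2 ((le_max_right _ _).trans (le_max_left _ _)))) htop
    (mem_Ici.2 ((le_log_iff_exp_le hbpos).2 ((le_max_right _ _).trans (hR.trans hb))))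
  have hexp : exp (t - n * r t) = b ^ n := by rw [hlt, exp_log hbpos]
  have hT't : T' ≤ t := ht
  have ht₀ : t ∈ Ici t₀ := (le_max_right _ _).trans ((le_max_left _ _).trans hT't)
  refine ⟨t, (le_max_left _ _).trans ((le_max_left _ _).trans hT't),
    one_pos.trans_le ((le_max_right _ _).trans hT't), v, hv, ?_, ?_, hexp.ge⟩
  · rintro rfl
    have hb0 : b = 0 := norm_zero
    linarith [le_max_left 1 (exp (T' - n * r T'))]
  · rwa [← heq t ht₀, hexp]

open intLattice

variable {g : Matrix (Fin (m + n)) (Fin (m + n)) ℝ}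

theorem psiApproximable_of_fst_eq_zero (hm : m ≠ 0) (hn : n ≠ 0) (hψ : ∀ x ∈ Ici x₀, 0 ≤ ψ x)
    {v : Fin (m + n) → ℝ} (hv : v ∈ intLattice g) (hv0 : v ≠ 0)
    (hfst : (fun i : Fin m => v (Fin.castAdd n i)) = 0) : PsiApproximable m n ψ (intLattice g) := by
  have hsnd : 0 < ‖fun j : Fin n => v (Fin.natAdd m j)‖ := by
    by_contra! h
    exact hv0 (norm_le_zero_iff.1 ((norm_le_iff_castAdd_natAdd le_rfl).2 ⟨by simp [hfst], h⟩))
  refine psiApproximable_of_eventually ?_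
  filter_upwards [eventually_ge_atTop (max 1 x₀)] with R hR
  obtain ⟨N, hN⟩ := exists_nat_gt (R / ‖fun j : Fin n => v (Fin.natAdd m j)‖)
  have hNR : R ≤ ‖fun j : Fin n => (N • v) (Fin.natAdd m j)‖ := by
    rw [show (fun j : Fin n => (N • v) (Fin.natAdd m j)) = N • fun j => v (Fin.natAdd m j) from rfl,
      RCLike.norm_nsmul ℝ, nsmul_eq_mul]
    exact ((div_lt_iff₀ hsnd).1 hN).le
  refine ⟨N • v, nsmul_mem hv N, hNR, ?_⟩
  rw [show (fun i : Fin m => (N • v) (Fin.castAdd n i)) = N • fun i => v (Fin.castAdd n i) from rfl,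
    hfst, smul_zero, norm_zero, zero_pow hm]
  exact hψ _ (le_pow_of_max_one_le hn (hR.trans hNR))

theorem psiApproximable_of_le (hm : m ≠ 0) (hn : n ≠ 0) (hg : IsUnit g.det)
    (h0 : ∀ v ∈ intLattice g, v ≠ 0 → (fun i : Fin m => v (Fin.castAdd n i)) ≠ 0)
    {c : ℝ} (hc : 0 < c) (hψ : ∀ x ∈ Ici x₀, c ≤ ψ x) : PsiApproximable m n ψ (intLattice g) := by
  refine psiApproximable_of_eventually ?_
  filter_upwards [eventually_ge_atTop (max 1 x₀)] with R hR
  obtain ⟨ε, hε, hεR⟩ := exists_pos_forall_norm_fst_le hg h0 R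
  set δ := min ε (min 1 c)
  have hδ : 0 < δ := lt_min hε (lt_min one_pos hc)
  obtain ⟨v, hv, hv0, hvδ⟩ := exists_ne_zero_norm_fst_le hn hg hδ
  have hRv := hεR v hv hv0 (hvδ.trans (min_le_left _ _))
  refine ⟨v, hv, hRv.le, ?_⟩
  calc ‖fun i : Fin m => v (Fin.castAdd n i)‖ ^ m ≤ δ ^ m := pow_le_pow_left₀ (norm_nonneg _) hvδ m
    _ ≤ δ := pow_le_of_le_one hδ.le ((min_le_right _ _).trans (min_le_left _ _)) hm
    _ ≤ c := (min_le_right _ _).trans (min_le_right _ _)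
    _ ≤ _ := hψ _ (le_pow_of_max_one_le hn (hR.trans hRv.le))

theorem exp_neg_le_of_forall_le (hcont : ContinuousOn (fun t => t - n * r t) (Ici t₀))
    (htop : Tendsto (fun t => t - n * r t) atTop atTop)
    (heq : ∀ t ∈ Ici t₀, ψ (exp (t - n * r t)) = exp (-t - m * r t))
    {B : ℝ} (hB : ∀ t ∈ Ici t₀, t + m * r t ≤ B) :
    ∀ x ∈ Ici (exp (t₀ - n * r t₀)), exp (-B) ≤ ψ x := by
  intro x hx
  have hxpos : 0 < x := (exp_pos _).trans_le hx
  obtain ⟨t, ht, hlt : t - n * r t = log x⟩ := intermediate_value_Ici hcont htop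
    (mem_Ici.2 ((le_log_iff_exp_le hxpos).2 hx))
  rw [← exp_log hxpos, ← hlt, heq t ht, exp_le_exp]
  linarith [hB t ht]

theorem psiApproximable_of_hasExcursions (hn : n ≠ 0) (hg : IsUnit g.det)
    (h0 : ∀ v ∈ intLattice g, v ≠ 0 → (fun i : Fin m => v (Fin.castAdd n i)) ≠ 0)
    (hanti : AntitoneOn ψ (Ici x₀))
    (heq : ∀ t ∈ Ici t₀, ψ (exp (t - n * r t)) = exp (-t - m * r t))
    (hL : MonotoneOn (fun t => t + m * r t) (Ici t₀))
    (hLtop : ¬BddAbove ((fun t => t + m * r t) '' Ici t₀))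
    (h : HasExcursions m n r (intLattice g)) : PsiApproximable m n ψ (intLattice g) := by
  refine psiApproximable_of_eventually ?_
  filter_upwards [eventually_ge_atTop (max 1 x₀)] with R hR
  obtain ⟨ε, hε, hεR⟩ := exists_pos_forall_norm_fst_le hg h0 R
  obtain ⟨_, ⟨t₁, ht₁, rfl⟩, hLt₁⟩ := not_bddAbove_iff.1 hLtop (-log (ε ^ m))
  obtain ⟨t, ht₁t, -, w, hw, hw0, hwm, hwn⟩ := h t₁
  have ht : t ∈ Ici t₀ := le_trans ht₁ ht₁t
  have hsmall : ‖fun i : Fin m => w (Fin.castAdd n i)‖ < ε := by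
    refine lt_of_pow_lt_pow_left₀ m hε.le (hwm.trans_lt ?_)
    rw [← exp_log (pow_pos hε m), exp_lt_exp]
    linarith [hL ht₁ ht ht₁t]
  have hRw := hεR w hw hw0 hsmall.le
  have hx₀ := le_pow_of_max_one_le hn (hR.trans hRw.le)
  refine ⟨w, hw, hRw.le, ?_⟩
  calc _ ≤ exp (-t - m * r t) := hwm
    _ = ψ (exp (t - n * r t)) := (heq t ht).symm
    _ ≤ _ := hanti hx₀ (hx₀.trans hwn) hwn

end Approximation

theorem stmt_12_general (m n : ℕ) (hm : 1 ≤ m) (hn : 1 ≤ n) (x₀ t₀ : ℝ)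
    (ψ r : ℝ → ℝ)
    (hanti : AntitoneOn ψ (Ici x₀))
    (hpos : ∀ x ∈ Ici x₀, 0 < ψ x)
    (hlam : StrictMonoOn (fun t => t - n * r t) (Ici t₀))
    (hlaminf : Tendsto (fun t => t - n * r t) atTop atTop)
    (hL : MonotoneOn (fun t => t + m * r t) (Ici t₀))
    (hx₀ : x₀ = Real.exp (t₀ - n * r t₀))
    (heq : ∀ t ∈ Ici t₀, ψ (Real.exp (t - n * r t)) = Real.exp (-t - m * r t))
    (g : Matrix (Fin (m + n)) (Fin (m + n)) ℝ) (hg : |g.det| = 1)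
    (Λ : Set (Fin (m + n) → ℝ))
    (hΛ : Λ = {v | ∃ p : Fin (m + n) → ℤ, v = g.mulVec fun i => (p i : ℝ)}) :
    (∀ R : ℝ, ∃ v ∈ Λ,
      R ≤ ‖fun j : Fin n => v (Fin.natAdd m j)‖ ∧
      ‖fun i : Fin m => v (Fin.castAdd n i)‖ ^ m
        ≤ ψ (‖fun j : Fin n => v (Fin.natAdd m j)‖ ^ n)) ↔
    (∀ T : ℝ, ∃ t : ℝ, T ≤ t ∧ 0 < t ∧
      r t ≤ sSup {z : ℝ | ∃ v ∈ Λ, v ≠ 0 ∧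
        z = -Real.log ‖fun i : Fin (m + n) =>
          (if (i : ℕ) < m then Real.exp (t / m) else Real.exp (-t / n)) * v i‖}) := by
  have hm' : m ≠ 0 := by omega
  have hn' : n ≠ 0 := by omega
  have hdet : IsUnit g.det := isUnit_iff_ne_zero.2 fun h => by simp [h] at hg
  have hcont : ContinuousOn (fun t => t - n * r t) (Ici t₀) :=
    continuousOn_sub_mul_of_monotoneOn (by positivity) (by positivity) hlam.monotoneOn hL
  rw [show Λ = intLattice g from hΛ]
  simp_rw [intLattice.le_sSup_neg_log_norm_flow_iff hm' hn' hdet]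
  refine ⟨hasExcursions_of_psiApproximable hn' hcont hlaminf heq, fun h => ?_⟩
  by_cases h0 : ∃ v ∈ intLattice g, v ≠ 0 ∧ (fun i : Fin m => v (Fin.castAdd n i)) = 0
  · obtain ⟨v, hv, hv0, hfst⟩ := h0
    exact psiApproximable_of_fst_eq_zero hm' hn' (fun x hx => (hpos x hx).le) hv hv0 hfst
  push Not at h0
  by_cases hB : BddAbove ((fun t => t + m * r t) '' Ici t₀)
  · obtain ⟨B, hB⟩ := hB
    subst hx₀
    exact psiApproximable_of_le hm' hn' hdet h0 (exp_pos (-B))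
      (exp_neg_le_of_forall_le hcont hlaminf heq fun t ht => hB ⟨t, ht, rfl⟩)
  · exact psiApproximable_of_hasExcursions hn' hdet h0 hanti heq hL hB h

/-- Theorem 8.5: the Dani correspondence between ψ-approximability of unimodular
lattices and excursions of the diagonal flow on the space of lattices. -/
theorem stmt_12 (m n : ℕ) (hm : 1 ≤ m) (hn : 1 ≤ n) (x₀ t₀ : ℝ)
    (ψ r : ℝ → ℝ)
    (hcont : ContinuousOn ψ (Ici x₀)) (hanti : AntitoneOn ψ (Ici x₀))
    (hpos : ∀ x ∈ Ici x₀, 0 < ψ x)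
    (hlam : StrictMonoOn (fun t => t - n * r t) (Ici t₀))
    (hlaminf : Tendsto (fun t => t - n * r t) atTop atTop)
    (hL : MonotoneOn (fun t => t + m * r t) (Ici t₀))
    (hx₀ : x₀ = Real.exp (t₀ - n * r t₀))
    (heq : ∀ t ∈ Ici t₀, ψ (Real.exp (t - n * r t)) = Real.exp (-t - m * r t))
    (g : Matrix (Fin (m + n)) (Fin (m + n)) ℝ) (hg : |g.det| = 1)
    (Λ : Set (Fin (m + n) → ℝ))
    (hΛ : Λ = {v | ∃ p : Fin (m + n) → ℤ, v = g.mulVec fun i => (p i : ℝ)}) :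
    (∀ R : ℝ, ∃ v ∈ Λ,
      R ≤ ‖fun j : Fin n => v (Fin.natAdd m j)‖ ∧
      ‖fun i : Fin m => v (Fin.castAdd n i)‖ ^ m
        ≤ ψ (‖fun j : Fin n => v (Fin.natAdd m j)‖ ^ n)) ↔
    (∀ T : ℝ, ∃ t : ℝ, T ≤ t ∧ 0 < t ∧
      r t ≤ sSup {z : ℝ | ∃ v ∈ Λ, v ≠ 0 ∧
        z = -Real.log ‖fun i : Fin (m + n) =>
          (if (i : ℕ) < m then Real.exp (t / m) else Real.exp (-t / n)) * v i‖}) :=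
  stmt_12_general m n hm hn x₀ t₀ ψ r hanti hpos hlam hlaminf hL hx₀ heq g hg Λ hΛ
end
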